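/- arXiv:2503.06830 — 8 statements merged into one kernel-verified Lean document; each statement's English description precedes it below -/
import Mathlib

section
/- Let M=(E,r_M) be a q-matroid, let E' be a vector space over F_q containing E with dim E' = dim E + 1, and let μ be a modular cut selector of M. Suppose r' is a nonnegative-integer-valued function on the lattice L(E') of subspaces of E' such that r'(X) = r_M(X) for all subspaces X ≤ E, and r'(X + e) = r_M(X) + δ_{X,e} for all subspaces X ≤ E and all one-dimensional subspaces e of E' not contained in E, where δ_{X,e} = 0 if cl_M(X) ∈ μ(e) and δ_{X,e} = 1 otherwise. Then N_μ = (E', r') is a q-matroid, its restriction to E equals M, and for every one-dimensional subspace e of E' not contained in E, the set {F ∈ F_M : F + e is a flat of N_μ and r'(F + e) = r'(F)} equals μ(e). -/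
open Module Submodule

variable {K V V₁ V₂ : Type*}

section Defs

variable [Field K] [AddCommGroup V] [Module K V]

/-- A one-dimensional subspace. -/
def OneDim (x : Submodule K V) : Prop := Module.finrank K x = 1

/-- The q-matroid rank axioms (R1), (R2), (R3) for a rank function on the
lattice of subspaces of `V`. -/
def IsQMatroid (r : Submodule K V → ℕ) : Prop :=
  (∀ X : Submodule K V, r X ≤ Module.finrank K X) ∧
  (∀ X Y : Submodule K V, X ≤ Y → r X ≤ r Y) ∧
  (∀ X Y : Submodule K V, r (X ⊔ Y) + r (X ⊓ Y) ≤ r X + r Y)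

/-- The closure of `X`: the sum of all one-dimensional subspaces `x`
with `r (X + x) = r X`. -/
def qcl (r : Submodule K V → ℕ) (X : Submodule K V) : Submodule K V :=
  sSup {x : Submodule K V | OneDim x ∧ r (X ⊔ x) = r X}

/-- `F` is a flat: adding any one-dimensional subspace not contained in `F`
increases the rank. -/
def IsFlat (r : Submodule K V → ℕ) (F : Submodule K V) : Prop :=
  ∀ x : Submodule K V, OneDim x → ¬ x ≤ F → r F < r (F ⊔ x)

/-- `(F₁, F₂)` is a modular pair. -/
def ModularPair (r : Submodule K V → ℕ) (F₁ F₂ : Submodule K V) : Prop :=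
  r (F₁ ⊔ F₂) + r (F₁ ⊓ F₂) = r F₁ + r F₂

/-- A modular cut: a collection of flats satisfying (M1) and (M2). -/
def IsModularCut (r : Submodule K V → ℕ) (M : Set (Submodule K V)) : Prop :=
  (∀ F ∈ M, IsFlat r F) ∧
  (∀ F ∈ M, ∀ F' : Submodule K V, IsFlat r F' → F ≤ F' → F' ∈ M) ∧
  (∀ F₁ ∈ M, ∀ F₂ ∈ M, ModularPair r F₁ F₂ → F₁ ⊓ F₂ ∈ M)

/-- `Δ_q(V, W)`: the set of one-dimensional subspaces of `V` not contained
in the subspace `W`. -/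
def Delta (W : Submodule K V) : Set (Submodule K V) :=
  {e : Submodule K V | OneDim e ∧ ¬ e ≤ W}

/-- A modular cut selector for a q-matroid `rM` on `W` (with respect to the
ambient space `V`): every value is a modular cut, and property (QM) holds. -/
def IsMCS (W : Submodule K V) (rM : Submodule K ↥W → ℕ)
    (μ : Delta W → Set (Submodule K ↥W)) : Prop :=
  (∀ e : Delta W, IsModularCut rM (μ e)) ∧
  (∀ e₁ e₂ : Delta W, ∀ F ∈ μ e₁,
    (Submodule.map W.subtype F ⊔ (e₁ : Submodule K V) =
      Submodule.map W.subtype F ⊔ (e₂ : Submodule K V) ↔ F ∈ μ e₂))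

/-- `B` is a basis of the q-matroid with rank function `r`:
`r B = dim B = r ⊤`. -/
def IsBasisOf (r : Submodule K V → ℕ) (B : Submodule K V) : Prop :=
  r B = Module.finrank K B ∧ Module.finrank K B = r ⊤

end Defs

section QclLemmas

variable [Field K] [AddCommGroup V] [Module K V]

lemma qcl_step {r : Submodule K V → ℕ} (hr : IsQMatroid r) {X Y x : Submodule K V}
    (hXY : X ≤ Y) (hx : r (X ⊔ x) = r X) : r (Y ⊔ x) = r Y := by
  refine le_antisymm ?_ (hr.2.1 _ _ le_sup_left)
  have h1 := hr.2.2 Y (X ⊔ x)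
  have h2 : Y ⊔ (X ⊔ x) = Y ⊔ x := by rw [← sup_assoc, sup_eq_left.mpr hXY]
  have h3 : r X ≤ r (Y ⊓ (X ⊔ x)) := hr.2.1 _ _ (le_inf hXY le_sup_left)
  rw [h2, hx] at h1
  omega

lemma le_qcl (r : Submodule K V → ℕ) (X : Submodule K V) : X ≤ qcl r X := by
  intro v hv
  by_cases hv0 : v = 0
  · simp [hv0]
  · have h1 : OneDim (K ∙ v) := finrank_span_singleton hv0
    have h2 : X ⊔ (K ∙ v) = X := sup_eq_left.mpr
      ((Submodule.span_le).mpr (by simpa using hv))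
    have h3 : (K ∙ v) ≤ qcl r X := le_sSup ⟨h1, by rw [h2]⟩
    exact h3 (Submodule.mem_span_singleton_self v)

lemma mem_qcl_of {r : Submodule K V → ℕ} {X x : Submodule K V}
    (hx : OneDim x) (hrx : r (X ⊔ x) = r X) : x ≤ qcl r X :=
  le_sSup ⟨hx, hrx⟩

variable [FiniteDimensional K V]

lemma rank_sup_sSup {r : Submodule K V → ℕ} (hr : IsQMatroid r)
    {X : Submodule K V} {S : Set (Submodule K V)} (hS : ∀ s ∈ S, r (X ⊔ s) = r X) :
    r (X ⊔ sSup S) = r X := by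
  set T := X ⊔ sSup S with hT
  suffices h : ∀ k (Z : Submodule K V), X ≤ Z → Z ≤ T → r Z = r X →
      finrank K T ≤ finrank K Z + k → r T = r X by
    exact h (finrank K T) X le_rfl le_sup_left rfl (by omega)
  intro k
  induction k with
  | zero =>
    intro Z h1 h2 h3 h4
    have hZT : Z = T := Submodule.eq_of_le_of_finrank_le h2 (by omega)
    rw [← hZT]; exact h3
  | succ k ih =>
    intro Z h1 h2 h3 h4
    by_cases hZ : T ≤ Z
    · rw [le_antisymm hZ h2]; exact h3
    · obtain ⟨s, hsS, hsZ⟩ : ∃ s ∈ S, ¬ s ≤ Z := by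
        by_contra hc
        push_neg at hc
        exact hZ (sup_le h1 (sSup_le hc))
      have hlt : Z < Z ⊔ s := left_lt_sup.mpr hsZ
      have hfr : finrank K Z < finrank K ↥(Z ⊔ s) :=
        Submodule.finrank_lt_finrank_of_lt hlt
      refine ih (Z ⊔ s) (le_trans h1 le_sup_left)
        (sup_le h2 (le_trans (le_sSup hsS) le_sup_right)) ?_ (by omega)
      rw [qcl_step hr h1 (hS s hsS), h3]

lemma rank_qcl {r : Submodule K V → ℕ} (hr : IsQMatroid r) (X : Submodule K V) :
    r (qcl r X) = r X := by
  have h1 : X ⊔ qcl r X = qcl r X := sup_eq_right.mpr (le_qcl r X)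
  rw [← h1]
  exact rank_sup_sSup hr (fun s hs => hs.2)

lemma qcl_mono {r : Submodule K V → ℕ} (hr : IsQMatroid r) {X Y : Submodule K V}
    (h : X ≤ Y) : qcl r X ≤ qcl r Y :=
  sSup_le_sSup (fun s hs => ⟨hs.1, qcl_step hr h hs.2⟩)

lemma qcl_flat {r : Submodule K V → ℕ} (hr : IsQMatroid r) (X : Submodule K V) :
    IsFlat r (qcl r X) := by
  intro y hy hyn
  rcases (hr.2.1 _ _ (le_sup_left : qcl r X ≤ qcl r X ⊔ y)).lt_or_eq with h1 | h1
  · exact h1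
  · exfalso
    have h2 : r (X ⊔ y) = r X := by
      refine le_antisymm ?_ (hr.2.1 _ _ le_sup_left)
      calc r (X ⊔ y) ≤ r (qcl r X ⊔ y) := hr.2.1 _ _ (sup_le_sup_right (le_qcl r X) y)
        _ = r (qcl r X) := h1.symm
        _ = r X := rank_qcl hr X
    exact hyn (mem_qcl_of hy h2)

lemma qcl_eq_of_flat {r : Submodule K V → ℕ} {F : Submodule K V}
    (hF : IsFlat r F) : qcl r F = F := by
  refine le_antisymm (sSup_le fun s hs => ?_) (le_qcl r F)
  by_contra hsF
  exact (hF s hs.1 hsF).ne' hs.2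

lemma flat_of_qcl_eq {r : Submodule K V → ℕ} (hr : IsQMatroid r) {Z : Submodule K V}
    (h : qcl r Z = Z) : IsFlat r Z := by
  intro y hy hyn
  rcases (hr.2.1 Z (Z ⊔ y) le_sup_left).lt_or_eq with h1 | h1
  · exact h1
  · exact absurd (h ▸ mem_qcl_of hy h1.symm) hyn

lemma qcl_eq_qcl {r : Submodule K V → ℕ} (hr : IsQMatroid r) {X Y : Submodule K V}
    (hXY : X ≤ Y) (hrk : r X = r Y) : qcl r X = qcl r Y := by
  refine le_antisymm (qcl_mono hr hXY) (sSup_le fun s hs => le_sSup ⟨hs.1, ?_⟩)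
  have h1 : r (X ⊔ s) ≤ r (Y ⊔ s) := hr.2.1 _ _ (sup_le_sup_right hXY s)
  have h2 : r X ≤ r (X ⊔ s) := hr.2.1 _ _ le_sup_left
  have h3 := hs.2
  omega

lemma rank_qcl_sup {r : Submodule K V → ℕ} (hr : IsQMatroid r) (X Y : Submodule K V) :
    r (qcl r X ⊔ Y) = r (X ⊔ Y) := by
  refine le_antisymm ?_ (hr.2.1 _ _ (sup_le_sup_right (le_qcl r X) Y))
  calc r (qcl r X ⊔ Y) ≤ r (qcl r (X ⊔ Y)) :=
        hr.2.1 _ _ (sup_le (qcl_mono hr le_sup_left)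
          (le_trans le_sup_right (le_qcl r _)))
    _ = r (X ⊔ Y) := rank_qcl hr _

lemma flat_inf {r : Submodule K V → ℕ} (hr : IsQMatroid r) {F₁ F₂ : Submodule K V}
    (h1 : IsFlat r F₁) (h2 : IsFlat r F₂) : IsFlat r (F₁ ⊓ F₂) := by
  apply flat_of_qcl_eq hr
  refine le_antisymm ?_ (le_qcl r _)
  calc qcl r (F₁ ⊓ F₂) ≤ qcl r F₁ ⊓ qcl r F₂ :=
        le_inf (qcl_mono hr inf_le_left) (qcl_mono hr inf_le_right)
    _ = F₁ ⊓ F₂ := by rw [qcl_eq_of_flat h1, qcl_eq_of_flat h2]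

lemma rank_sup_le {r : Submodule K V → ℕ} (hr : IsQMatroid r) (X z : Submodule K V) :
    r (X ⊔ z) ≤ r X + r z := by
  have := hr.2.2 X z
  omega

lemma onedim_exists {e : Submodule K V} (he : OneDim e) :
    ∃ v : V, v ≠ 0 ∧ e = K ∙ v := by
  have he' : Module.finrank K e = 1 := he
  have hne : e ≠ ⊥ := by
    intro h
    rw [h, finrank_bot] at he'
    omega
  obtain ⟨v, hv, hv0⟩ := e.ne_bot_iff.mp hne
  refine ⟨v, hv0, ?_⟩
  refine (Submodule.eq_of_le_of_finrank_le (Submodule.span_le.mpr (by simpa using hv)) ?_).symm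
  rw [finrank_span_singleton hv0]
  exact he'.le

end QclLemmas

section Geometry

variable [Field K] [AddCommGroup V] [Module K V] [FiniteDimensional K V]
variable (W : Submodule K V)

lemma sup_line_eq_top (hdim : finrank K V = finrank K ↥W + 1) {e : Submodule K V}
    (heW : ¬ e ≤ W) : W ⊔ e = ⊤ := by
  apply Submodule.eq_top_of_finrank_eq
  have h1 : W < W ⊔ e := left_lt_sup.mpr heW
  have h2 : finrank K ↥W < finrank K ↥(W ⊔ e) := Submodule.finrank_lt_finrank_of_lt h1
  have h3 : finrank K ↥(W ⊔ e) ≤ finrank K V := Submodule.finrank_le _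
  omega

lemma decomp (hdim : finrank K V = finrank K ↥W + 1) {A e : Submodule K V}
    (heW : ¬ e ≤ W) (heA : e ≤ A) : (A ⊓ W) ⊔ e = A := by
  refine le_antisymm (sup_le inf_le_left heA) ?_
  intro v hv
  have hv' : v ∈ W ⊔ e := by rw [sup_line_eq_top W hdim heW]; trivial
  obtain ⟨w, hw, y, hy, hvy⟩ := Submodule.mem_sup.mp hv'
  have hwA : w ∈ A ⊓ W := by
    refine ⟨?_, hw⟩
    have : w = v - y := by rw [← hvy]; abel
    rw [this]
    exact A.sub_mem hv (heA hy)
  exact Submodule.mem_sup.mpr ⟨w, hwA, y, hy, hvy⟩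

lemma line_inf_bot {e : Submodule K V} (he : OneDim e) (heW : ¬ e ≤ W) :
    e ⊓ W = ⊥ := by
  have he' : Module.finrank K e = 1 := he
  by_contra h
  have h1 : finrank K ↥(e ⊓ W) ≠ 0 := by
    rwa [Ne, Submodule.finrank_eq_zero]
  have h2 : e ⊓ W = e :=
    Submodule.eq_of_le_of_finrank_le inf_le_left (by omega)
  exact heW (h2 ▸ inf_le_right)

lemma sup_line_inf {U e : Submodule K V} (hU : U ≤ W) (he : OneDim e)
    (heW : ¬ e ≤ W) : (U ⊔ e) ⊓ W = U := by
  refine le_antisymm ?_ (le_inf le_sup_left hU)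
  intro v hv
  obtain ⟨hv1, hv2⟩ := Submodule.mem_inf.mp hv
  obtain ⟨u, hu, y, hy, hvy⟩ := Submodule.mem_sup.mp hv1
  have hy0 : y ∈ e ⊓ W := by
    refine ⟨hy, ?_⟩
    have : y = v - u := by rw [← hvy]; abel
    rw [this]
    exact W.sub_mem hv2 (hU hu)
  rw [line_inf_bot W he heW] at hy0
  have : y = 0 := hy0
  rw [this, add_zero] at hvy
  rwa [← hvy]

lemma exists_line {A : Submodule K V} (hA : ¬ A ≤ W) :
    ∃ e : Submodule K V, OneDim e ∧ ¬ e ≤ W ∧ e ≤ A := by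
  obtain ⟨v, hvA, hvW⟩ := SetLike.not_le_iff_exists.mp hA
  have hv0 : v ≠ 0 := fun h => hvW (h ▸ W.zero_mem)
  exact ⟨K ∙ v, finrank_span_singleton hv0,
    fun h => hvW (h (Submodule.mem_span_singleton_self v)),
    Submodule.span_le.mpr (by simpa using hvA)⟩

lemma exists_wline (hdim : finrank K V = finrank K ↥W + 1) {e₁ e₂ : Submodule K V}
    (h1 : OneDim e₁) (h1W : ¬ e₁ ≤ W) (h2 : OneDim e₂) (h2W : ¬ e₂ ≤ W)
    (hne : e₁ ≠ e₂) :
    ∃ w : Submodule K V, OneDim w ∧ w ≤ W ∧ e₁ ⊔ w = e₁ ⊔ e₂ ∧ e₂ ⊔ w = e₁ ⊔ e₂ := by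
  obtain ⟨a, ha0, hae⟩ := onedim_exists h1
  obtain ⟨b, hb0, hbe⟩ := onedim_exists h2
  have hb1 : b ∈ e₂ := hbe ▸ Submodule.mem_span_singleton_self b
  have ha1 : a ∈ e₁ := hae ▸ Submodule.mem_span_singleton_self a
  have hbV : b ∈ W ⊔ e₁ := by rw [sup_line_eq_top W hdim h1W]; trivial
  obtain ⟨u, hu, y, hy, huy⟩ := Submodule.mem_sup.mp hbV
  rw [hae] at hy
  obtain ⟨c, hc⟩ := Submodule.mem_span_singleton.mp hy
  -- b = u + c • a
  have hbua : b = u + c • a := by rw [← huy, hc]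
  have hu0 : u ≠ 0 := by
    intro h
    rw [h, zero_add] at hbua
    have : e₂ ≤ e₁ := by
      rw [hbe, hbua]
      exact Submodule.span_le.mpr (by simpa using e₁.smul_mem c ha1)
    have h1' : Module.finrank K e₁ = 1 := h1
    have h2' : Module.finrank K e₂ = 1 := h2
    exact hne (Submodule.eq_of_le_of_finrank_le this (by omega)).symm
  have hc0 : c ≠ 0 := by
    intro h
    rw [h, zero_smul, add_zero] at hbua
    exact h2W (hbe ▸ Submodule.span_le.mpr (by simpa using hbua ▸ hu))
  have hu12 : u ∈ e₁ ⊔ e₂ := by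
    have : u = b - c • a := by rw [hbua]; abel
    rw [this]
    exact (e₁ ⊔ e₂).sub_mem (le_sup_right (α := Submodule K V) hb1)
      ((e₁ ⊔ e₂).smul_mem c (le_sup_left (α := Submodule K V) ha1))
  refine ⟨K ∙ u, finrank_span_singleton hu0,
    Submodule.span_le.mpr (by simpa using hu), ?_, ?_⟩
  · refine le_antisymm (sup_le le_sup_left (Submodule.span_le.mpr (by simpa using hu12))) ?_
    refine sup_le le_sup_left ?_
    rw [hbe]
    refine Submodule.span_le.mpr ?_
    intro x hx
    simp only [Set.mem_singleton_iff] at hx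
    rw [hx, hbua]
    exact (e₁ ⊔ K ∙ u).add_mem
      (le_sup_right (α := Submodule K V) (Submodule.mem_span_singleton_self u))
      ((e₁ ⊔ K ∙ u).smul_mem c (le_sup_left (α := Submodule K V) ha1))
  · refine le_antisymm (sup_le le_sup_right (Submodule.span_le.mpr (by simpa using hu12))) ?_
    refine sup_le ?_ le_sup_left
    rw [hae]
    refine Submodule.span_le.mpr ?_
    intro x hx
    simp only [Set.mem_singleton_iff] at hx
    have haeq : a = c⁻¹ • (b - u) := by
      rw [hbua]
      simp [smul_smul, inv_mul_cancel₀ hc0]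
    rw [hx, haeq]
    exact (e₂ ⊔ K ∙ u).smul_mem c⁻¹ ((e₂ ⊔ K ∙ u).sub_mem
      (le_sup_left (α := Submodule K V) hb1)
      (le_sup_right (α := Submodule K V) (Submodule.mem_span_singleton_self u)))

end Geometry

set_option maxHeartbeats 1000000 in
/-- given a q-matroid `rM` on `W ≤ V` with `dim V = dim W + 1`,
a modular cut selector `μ`, and `r'` defined by the extension formula, the pair
`(V, r')` is a q-matroid, its restriction to `W` is `rM`, and for every
`e ∈ Δ_q(V, W)` the induced modular cut equals `μ e`. -/
theorem stmt0 [Field K] [Fintype K] [AddCommGroup V] [Module K V] [FiniteDimensional K V]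
    (W : Submodule K V) (hdim : Module.finrank K V = Module.finrank K ↥W + 1)
    (rM : Submodule K ↥W → ℕ) (hM : IsQMatroid rM)
    (μ : Delta W → Set (Submodule K ↥W)) (hμ : IsMCS W rM μ)
    (r' : Submodule K V → ℕ)
    (h₁ : ∀ X : Submodule K ↥W, r' (Submodule.map W.subtype X) = rM X)
    (h₂ : ∀ X : Submodule K ↥W, ∀ e : Delta W,
      (qcl rM X ∈ μ e → r' (Submodule.map W.subtype X ⊔ (e : Submodule K V)) = rM X) ∧
      (qcl rM X ∉ μ e → r' (Submodule.map W.subtype X ⊔ (e : Submodule K V)) = rM X + 1)) :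
    IsQMatroid r' ∧
    (∀ X : Submodule K ↥W, r' (Submodule.map W.subtype X) = rM X) ∧
    (∀ e : Delta W,
      {F : Submodule K ↥W | IsFlat rM F ∧
        IsFlat r' (Submodule.map W.subtype F ⊔ (e : Submodule K V)) ∧
        r' (Submodule.map W.subtype F ⊔ (e : Submodule K V)) =
          r' (Submodule.map W.subtype F)} = μ e) := by
  classical
  have inj : Function.Injective W.subtype := W.injective_subtype
  have minj : Function.Injective (Submodule.map W.subtype) :=
    Submodule.map_injective_of_injective inj
  have hmapmono : ∀ {p q : Submodule K ↥W}, p ≤ q →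
      Submodule.map W.subtype p ≤ Submodule.map W.subtype q :=
    fun h => Submodule.map_mono h
  have hco : ∀ A : Submodule K V, A ≤ W →
      Submodule.map W.subtype (Submodule.comap W.subtype A) = A := by
    intro A hA
    rw [Submodule.map_comap_subtype]
    exact inf_eq_right.mpr hA
  have hr'W : ∀ A : Submodule K V, A ≤ W → r' A = rM (Submodule.comap W.subtype A) := by
    intro A hA
    have := h₁ (Submodule.comap W.subtype A)
    rwa [hco A hA] at this
  have hdecomp : ∀ (A : Submodule K V) (e : Delta W), (e : Submodule K V) ≤ A →
      Submodule.map W.subtype (Submodule.comap W.subtype A) ⊔ (e : Submodule K V) = A := by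
    intro A e heA
    rw [Submodule.map_comap_subtype, inf_comm]
    exact decomp W hdim e.2.2 heA
  have hr'mem : ∀ (A : Submodule K V) (e : Delta W), (e : Submodule K V) ≤ A →
      qcl rM (Submodule.comap W.subtype A) ∈ μ e →
      r' A = rM (Submodule.comap W.subtype A) := by
    intro A e heA hm
    have := (h₂ (Submodule.comap W.subtype A) e).1 hm
    rwa [hdecomp A e heA] at this
  have hr'nmem : ∀ (A : Submodule K V) (e : Delta W), (e : Submodule K V) ≤ A →
      qcl rM (Submodule.comap W.subtype A) ∉ μ e →
      r' A = rM (Submodule.comap W.subtype A) + 1 := by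
    intro A e heA hm
    have := (h₂ (Submodule.comap W.subtype A) e).2 hm
    rwa [hdecomp A e heA] at this
  have hr'between : ∀ (A : Submodule K V) (e : Delta W), (e : Submodule K V) ≤ A →
      rM (Submodule.comap W.subtype A) ≤ r' A ∧
      r' A ≤ rM (Submodule.comap W.subtype A) + 1 := by
    intro A e heA
    by_cases hm : qcl rM (Submodule.comap W.subtype A) ∈ μ e
    · rw [hr'mem A e heA hm]; omega
    · rw [hr'nmem A e heA hm]; omega
  have hcomap_eq : ∀ (A : Submodule K V) (X : Submodule K ↥W) (e : Delta W),
      Submodule.map W.subtype X ⊔ (e : Submodule K V) = A →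
      Submodule.comap W.subtype A = X := by
    intro A X e h
    apply minj
    rw [Submodule.map_comap_subtype, ← h, inf_comm]
    exact sup_line_inf W (Submodule.map_subtype_le W X) e.2.1 e.2.2
  have honecomap : ∀ x : Submodule K V, x ≤ W → OneDim x →
      OneDim (Submodule.comap W.subtype x) := by
    intro x hxW hx
    have h1 := Submodule.finrank_map_subtype_eq W (Submodule.comap W.subtype x)
    rw [hco x hxW] at h1
    have hx' : Module.finrank K x = 1 := hx
    show Module.finrank K _ = 1
    omega
  have hup : ∀ (e : Delta W) (F G : Submodule K ↥W), F ∈ μ e → F ≤ qcl rM G →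
      qcl rM G ∈ μ e := fun e F G hF hle => (hμ.1 e).2.1 F hF _ (qcl_flat hM G) hle
  -- R1
  have R1 : ∀ A : Submodule K V, r' A ≤ finrank K ↥A := by
    intro A
    by_cases hA : A ≤ W
    · rw [hr'W A hA]
      calc rM (Submodule.comap W.subtype A)
          ≤ finrank K ↥(Submodule.comap W.subtype A) := hM.1 _
        _ = finrank K ↥(Submodule.map W.subtype (Submodule.comap W.subtype A)) :=
            (Submodule.finrank_map_subtype_eq W _).symm
        _ = finrank K ↥A := by rw [hco A hA]
    · obtain ⟨e, he, heW, heA⟩ := exists_line W hA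
      have h4 : (A ⊓ W) ⊓ e = ⊥ := by
        have h5 : (A ⊓ W) ⊓ e ≤ e ⊓ W := le_inf inf_le_right (inf_le_left.trans inf_le_right)
        rw [line_inf_bot W he heW] at h5
        exact le_bot_iff.mp h5
      have h5 := Submodule.finrank_sup_add_finrank_inf_eq (A ⊓ W) e
      rw [decomp W hdim heW heA, h4, finrank_bot] at h5
      have he' : finrank K ↥e = 1 := he
      have h6 := Submodule.finrank_map_subtype_eq W (Submodule.comap W.subtype A)
      rw [Submodule.map_comap_subtype] at h6
      have h7 : finrank K ↥(W ⊓ A) = finrank K ↥(A ⊓ W) := by rw [inf_comm]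
      have h8 := hM.1 (Submodule.comap W.subtype A)
      by_cases hm : qcl rM (Submodule.comap W.subtype A) ∈ μ ⟨e, he, heW⟩
      · rw [hr'mem A ⟨e, he, heW⟩ heA hm]; omega
      · rw [hr'nmem A ⟨e, he, heW⟩ heA hm]; omega
  -- R2
  have R2 : ∀ A B : Submodule K V, A ≤ B → r' A ≤ r' B := by
    intro A B hAB
    by_cases hA : A ≤ W
    · by_cases hB : B ≤ W
      · rw [hr'W A hA, hr'W B hB]
        exact hM.2.1 _ _ (Submodule.comap_mono hAB)
      · obtain ⟨e, he, heW, heB⟩ := exists_line W hB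
        have h1 : rM (Submodule.comap W.subtype A) ≤ rM (Submodule.comap W.subtype B) :=
          hM.2.1 _ _ (Submodule.comap_mono hAB)
        have h2 := (hr'between B ⟨e, he, heW⟩ heB).1
        rw [hr'W A hA]
        omega
    · have hB : ¬ B ≤ W := fun h => hA (hAB.trans h)
      obtain ⟨e, he, heW, heA⟩ := exists_line W hA
      have heB : e ≤ B := heA.trans hAB
      have h1 : rM (Submodule.comap W.subtype A) ≤ rM (Submodule.comap W.subtype B) :=
        hM.2.1 _ _ (Submodule.comap_mono hAB)
      rcases h1.lt_or_eq with hlt | heq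
      · have h2 := (hr'between A ⟨e, he, heW⟩ heA).2
        have h3 := (hr'between B ⟨e, he, heW⟩ heB).1
        omega
      · have hq : qcl rM (Submodule.comap W.subtype A) = qcl rM (Submodule.comap W.subtype B) :=
          qcl_eq_qcl hM (Submodule.comap_mono hAB) heq
        by_cases hm : qcl rM (Submodule.comap W.subtype A) ∈ μ ⟨e, he, heW⟩
        · rw [hr'mem A ⟨e, he, heW⟩ heA hm, hr'mem B ⟨e, he, heW⟩ heB (hq ▸ hm), heq]
        · rw [hr'nmem A ⟨e, he, heW⟩ heA hm, hr'nmem B ⟨e, he, heW⟩ heB (hq ▸ hm), heq]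
  -- Case II of submodularity
  have caseII : ∀ A B : Submodule K V, A ≤ W → ¬ B ≤ W →
      r' (A ⊔ B) + r' (A ⊓ B) ≤ r' A + r' B := by
    intro A B hA hB
    obtain ⟨e, he, heW, heB⟩ := exists_line W hB
    have heAB : e ≤ A ⊔ B := heB.trans le_sup_right
    have hsub := hM.2.2 (Submodule.comap W.subtype A) (Submodule.comap W.subtype B)
    have hsup : Submodule.comap W.subtype (A ⊔ B) =
        Submodule.comap W.subtype A ⊔ Submodule.comap W.subtype B := by
      apply hcomap_eq (A ⊔ B) _ ⟨e, he, heW⟩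
      rw [Submodule.map_sup, hco A hA, Submodule.map_comap_subtype]
      have d2 : (W ⊓ B) ⊔ e = B := by rw [inf_comm]; exact decomp W hdim heW heB
      calc (A ⊔ W ⊓ B) ⊔ e = A ⊔ ((W ⊓ B) ⊔ e) := sup_assoc _ _ _
        _ = A ⊔ B := by rw [d2]
    have hinf : Submodule.comap W.subtype (A ⊓ B) =
        Submodule.comap W.subtype A ⊓ Submodule.comap W.subtype B :=
      Submodule.comap_inf A B W.subtype
    rw [hr'W A hA, hr'W (A ⊓ B) (inf_le_left.trans hA), hinf]
    by_cases hm : qcl rM (Submodule.comap W.subtype B) ∈ μ ⟨e, he, heW⟩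
    · have hs : qcl rM (Submodule.comap W.subtype (A ⊔ B)) ∈ μ ⟨e, he, heW⟩ := by
        rw [hsup]; exact hup _ _ _ hm (qcl_mono hM le_sup_right)
      rw [hr'mem (A ⊔ B) ⟨e, he, heW⟩ heAB hs, hr'mem B ⟨e, he, heW⟩ heB hm, hsup]
      omega
    · rw [hr'nmem B ⟨e, he, heW⟩ heB hm]
      have h2 := (hr'between (A ⊔ B) ⟨e, he, heW⟩ heAB).2
      rw [hsup] at h2
      omega
  -- Case III of submodularity
  have caseIII : ∀ A B : Submodule K V, ¬ A ≤ W → ¬ B ≤ W → ¬ A ⊓ B ≤ W →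
      r' (A ⊔ B) + r' (A ⊓ B) ≤ r' A + r' B := by
    intro A B hA hB hAB
    obtain ⟨e, he, heW, heI⟩ := exists_line W hAB
    have heA : e ≤ A := heI.trans inf_le_left
    have heB : e ≤ B := heI.trans inf_le_right
    have heS : e ≤ A ⊔ B := heA.trans le_sup_left
    have hsub := hM.2.2 (Submodule.comap W.subtype A) (Submodule.comap W.subtype B)
    have hsup : Submodule.comap W.subtype (A ⊔ B) =
        Submodule.comap W.subtype A ⊔ Submodule.comap W.subtype B := by
      apply hcomap_eq (A ⊔ B) _ ⟨e, he, heW⟩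
      rw [Submodule.map_sup, Submodule.map_comap_subtype, Submodule.map_comap_subtype]
      have d1 : (W ⊓ A) ⊔ e = A := by rw [inf_comm]; exact decomp W hdim heW heA
      have d2 : (W ⊓ B) ⊔ e = B := by rw [inf_comm]; exact decomp W hdim heW heB
      calc (W ⊓ A ⊔ W ⊓ B) ⊔ e = (W ⊓ A ⊔ W ⊓ B) ⊔ (e ⊔ e) := by rw [sup_idem]
        _ = ((W ⊓ A) ⊔ e) ⊔ ((W ⊓ B) ⊔ e) := sup_sup_sup_comm _ _ _ _
        _ = A ⊔ B := by rw [d1, d2]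
    have hinf : Submodule.comap W.subtype (A ⊓ B) =
        Submodule.comap W.subtype A ⊓ Submodule.comap W.subtype B :=
      Submodule.comap_inf A B W.subtype
    by_cases hma : qcl rM (Submodule.comap W.subtype A) ∈ μ ⟨e, he, heW⟩
    · have hs : qcl rM (Submodule.comap W.subtype (A ⊔ B)) ∈ μ ⟨e, he, heW⟩ := by
        rw [hsup]; exact hup _ _ _ hma (qcl_mono hM le_sup_left)
      by_cases hmb : qcl rM (Submodule.comap W.subtype B) ∈ μ ⟨e, he, heW⟩
      · -- both in the cut
        rcases hsub.lt_or_eq with hlt | heqq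
        · rw [hr'mem A ⟨e, he, heW⟩ heA hma, hr'mem B ⟨e, he, heW⟩ heB hmb,
            hr'mem (A ⊔ B) ⟨e, he, heW⟩ heS hs, hsup]
          have h2 := (hr'between (A ⊓ B) ⟨e, he, heW⟩ heI).2
          rw [hinf] at h2
          omega
        · -- modular pair: the intersection closure is in the cut
          have e1 : rM (qcl rM (Submodule.comap W.subtype A) ⊔ qcl rM (Submodule.comap W.subtype B))
              = rM (Submodule.comap W.subtype A ⊔ Submodule.comap W.subtype B) := by
            rw [rank_qcl_sup hM, sup_comm (Submodule.comap W.subtype A), rank_qcl_sup hM,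
              sup_comm]
          have e2ge : rM (Submodule.comap W.subtype A ⊓ Submodule.comap W.subtype B) ≤
              rM (qcl rM (Submodule.comap W.subtype A) ⊓ qcl rM (Submodule.comap W.subtype B)) :=
            hM.2.1 _ _ (le_inf (inf_le_left.trans (le_qcl rM _))
              (inf_le_right.trans (le_qcl rM _)))
          have e2le : rM (qcl rM (Submodule.comap W.subtype A) ⊓ qcl rM (Submodule.comap W.subtype B)) ≤
              rM (Submodule.comap W.subtype A ⊓ Submodule.comap W.subtype B) := by
            have h5 := hM.2.2 (qcl rM (Submodule.comap W.subtype A))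
              (qcl rM (Submodule.comap W.subtype B))
            rw [e1, rank_qcl hM, rank_qcl hM] at h5
            omega
          have hmp : ModularPair rM (qcl rM (Submodule.comap W.subtype A))
              (qcl rM (Submodule.comap W.subtype B)) := by
            show rM _ + rM _ = _
            rw [e1, rank_qcl hM, rank_qcl hM, le_antisymm e2le e2ge]
            omega
          have hdm := (hμ.1 ⟨e, he, heW⟩).2.2 _ hma _ hmb hmp
          have hflat : IsFlat rM (qcl rM (Submodule.comap W.subtype A) ⊓
              qcl rM (Submodule.comap W.subtype B)) :=
            flat_inf hM (qcl_flat hM _) (qcl_flat hM _)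
          have hqd : qcl rM (Submodule.comap W.subtype A ⊓ Submodule.comap W.subtype B) =
              qcl rM (Submodule.comap W.subtype A) ⊓ qcl rM (Submodule.comap W.subtype B) := by
            rw [qcl_eq_qcl hM (le_inf (inf_le_left.trans (le_qcl rM _))
              (inf_le_right.trans (le_qcl rM _))) (le_antisymm e2ge e2le),
              qcl_eq_of_flat hflat]
          have hmd : qcl rM (Submodule.comap W.subtype (A ⊓ B)) ∈ μ ⟨e, he, heW⟩ := by
            rw [hinf, hqd]; exact hdm
          rw [hr'mem A ⟨e, he, heW⟩ heA hma, hr'mem B ⟨e, he, heW⟩ heB hmb,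
            hr'mem (A ⊔ B) ⟨e, he, heW⟩ heS hs, hr'mem (A ⊓ B) ⟨e, he, heW⟩ heI hmd,
            hsup, hinf]
          omega
      · rw [hr'mem A ⟨e, he, heW⟩ heA hma, hr'nmem B ⟨e, he, heW⟩ heB hmb,
          hr'mem (A ⊔ B) ⟨e, he, heW⟩ heS hs, hsup]
        have h2 := (hr'between (A ⊓ B) ⟨e, he, heW⟩ heI).2
        rw [hinf] at h2
        omega
    · by_cases hmb : qcl rM (Submodule.comap W.subtype B) ∈ μ ⟨e, he, heW⟩
      · have hs : qcl rM (Submodule.comap W.subtype (A ⊔ B)) ∈ μ ⟨e, he, heW⟩ := by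
          rw [hsup]; exact hup _ _ _ hmb (qcl_mono hM le_sup_right)
        rw [hr'nmem A ⟨e, he, heW⟩ heA hma, hr'mem B ⟨e, he, heW⟩ heB hmb,
          hr'mem (A ⊔ B) ⟨e, he, heW⟩ heS hs, hsup]
        have h2 := (hr'between (A ⊓ B) ⟨e, he, heW⟩ heI).2
        rw [hinf] at h2
        omega
      · rw [hr'nmem A ⟨e, he, heW⟩ heA hma, hr'nmem B ⟨e, he, heW⟩ heB hmb]
        have h2 := (hr'between (A ⊓ B) ⟨e, he, heW⟩ heI).2
        have h3 := (hr'between (A ⊔ B) ⟨e, he, heW⟩ heS).2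
        rw [hinf] at h2
        rw [hsup] at h3
        omega
  -- Case IV of submodularity: A, B not in W but A ⊓ B in W
  have caseIV : ∀ A B : Submodule K V, ¬ A ≤ W → ¬ B ≤ W → A ⊓ B ≤ W →
      r' (A ⊔ B) + r' (A ⊓ B) ≤ r' A + r' B := by
    intro A B hA hB hAB
    obtain ⟨e₁, he₁, he₁W, he₁A⟩ := exists_line W hA
    obtain ⟨e₂, he₂, he₂W, he₂B⟩ := exists_line W hB
    have hne : e₁ ≠ e₂ := by
      intro h
      have h1 : e₁ ≤ A ⊓ B := le_inf he₁A (by rw [h]; exact he₂B)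
      exact he₁W (h1.trans hAB)
    obtain ⟨w, hw1, hwW, hwe₁, hwe₂⟩ := exists_wline W hdim he₁ he₁W he₂ he₂W hne
    have hmz : Submodule.map W.subtype (Submodule.comap W.subtype w) = w := hco w hwW
    have hz1 : OneDim (Submodule.comap W.subtype w) := honecomap w hwW hw1
    have hz1' : Module.finrank K ↥(Submodule.comap W.subtype w) = 1 := hz1
    have he₁S : e₁ ≤ A ⊔ B := he₁A.trans le_sup_left
    have he₂S : e₂ ≤ A ⊔ B := he₂B.trans le_sup_right
    -- QM transfer facts
    have hQMjoin : ∀ F : Submodule K ↥W, Submodule.comap W.subtype w ≤ F →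
        Submodule.map W.subtype F ⊔ e₁ = Submodule.map W.subtype F ⊔ e₂ := by
      intro F hzF
      have hwF : w ≤ Submodule.map W.subtype F := by
        have := hmapmono hzF
        rwa [hmz] at this
      have c1 : e₂ ≤ Submodule.map W.subtype F ⊔ e₁ := by
        have h1 : e₂ ≤ e₁ ⊔ w := by rw [hwe₁]; exact le_sup_right
        exact h1.trans (sup_le le_sup_right (hwF.trans le_sup_left))
      have c2 : e₁ ≤ Submodule.map W.subtype F ⊔ e₂ := by
        have h1 : e₁ ≤ e₂ ⊔ w := by rw [hwe₂]; exact le_sup_left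
        exact h1.trans (sup_le le_sup_right (hwF.trans le_sup_left))
      exact le_antisymm (sup_le le_sup_left c2) (sup_le le_sup_left c1)
    have htrans12 : ∀ F : Submodule K ↥W, Submodule.comap W.subtype w ≤ F →
        F ∈ μ ⟨e₁, he₁, he₁W⟩ → F ∈ μ ⟨e₂, he₂, he₂W⟩ :=
      fun F hz hF => (hμ.2 ⟨e₁, he₁, he₁W⟩ ⟨e₂, he₂, he₂W⟩ F hF).1 (hQMjoin F hz)
    have htrans21 : ∀ F : Submodule K ↥W, Submodule.comap W.subtype w ≤ F →
        F ∈ μ ⟨e₂, he₂, he₂W⟩ → F ∈ μ ⟨e₁, he₁, he₁W⟩ :=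
      fun F hz hF => (hμ.2 ⟨e₂, he₂, he₂W⟩ ⟨e₁, he₁, he₁W⟩ F hF).1 (hQMjoin F hz).symm
    have hzmem : ∀ F : Submodule K ↥W, F ∈ μ ⟨e₁, he₁, he₁W⟩ → F ∈ μ ⟨e₂, he₂, he₂W⟩ →
        Submodule.comap W.subtype w ≤ F := by
      intro F hF1 hF2
      have hj := (hμ.2 ⟨e₁, he₁, he₁W⟩ ⟨e₂, he₂, he₂W⟩ F hF1).2 hF2
      have hwle : w ≤ Submodule.map W.subtype F ⊔ e₁ := by
        have h1 : e₂ ≤ Submodule.map W.subtype F ⊔ e₁ := by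
          rw [hj]; exact le_sup_right
        have h2 : w ≤ e₁ ⊔ e₂ := by rw [← hwe₁]; exact le_sup_right
        exact h2.trans (sup_le le_sup_right h1)
      have hwF : w ≤ Submodule.map W.subtype F := by
        have h3 : w ≤ (Submodule.map W.subtype F ⊔ e₁) ⊓ W := le_inf hwle hwW
        rwa [sup_line_inf W (Submodule.map_subtype_le W F) he₁ he₁W] at h3
      calc Submodule.comap W.subtype w
          ≤ Submodule.comap W.subtype (Submodule.map W.subtype F) := Submodule.comap_mono hwF
        _ = F := by rw [Submodule.comap_map_eq, Submodule.ker_subtype, sup_bot_eq]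
    -- decomposition of A ⊔ B
    have hABsup1 : Submodule.map W.subtype
        (Submodule.comap W.subtype A ⊔ Submodule.comap W.subtype B ⊔
          Submodule.comap W.subtype w) ⊔ e₁ = A ⊔ B := by
      rw [Submodule.map_sup, Submodule.map_sup, hmz]
      calc (Submodule.map W.subtype (Submodule.comap W.subtype A) ⊔
            Submodule.map W.subtype (Submodule.comap W.subtype B)) ⊔ w ⊔ e₁
          = (Submodule.map W.subtype (Submodule.comap W.subtype A) ⊔
            Submodule.map W.subtype (Submodule.comap W.subtype B)) ⊔ (w ⊔ e₁) :=
            sup_assoc _ _ _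
        _ = (Submodule.map W.subtype (Submodule.comap W.subtype A) ⊔
            Submodule.map W.subtype (Submodule.comap W.subtype B)) ⊔ (e₁ ⊔ w) := by
            rw [sup_comm w e₁]
        _ = (Submodule.map W.subtype (Submodule.comap W.subtype A) ⊔
            Submodule.map W.subtype (Submodule.comap W.subtype B)) ⊔ (e₁ ⊔ e₂) := by
            rw [hwe₁]
        _ = (Submodule.map W.subtype (Submodule.comap W.subtype A) ⊔ e₁) ⊔
            (Submodule.map W.subtype (Submodule.comap W.subtype B) ⊔ e₂) :=
            (sup_sup_sup_comm _ _ _ _).symm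
        _ = A ⊔ B := by
            rw [hdecomp A ⟨e₁, he₁, he₁W⟩ he₁A, hdecomp B ⟨e₂, he₂, he₂W⟩ he₂B]
    have hcs : Submodule.comap W.subtype (A ⊔ B) =
        Submodule.comap W.subtype A ⊔ Submodule.comap W.subtype B ⊔
          Submodule.comap W.subtype w :=
      hcomap_eq (A ⊔ B) _ ⟨e₁, he₁, he₁W⟩ hABsup1
    have hinf : r' (A ⊓ B) =
        rM (Submodule.comap W.subtype A ⊓ Submodule.comap W.subtype B) := by
      rw [hr'W (A ⊓ B) hAB, Submodule.comap_inf A B W.subtype]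
    have hsub := hM.2.2 (Submodule.comap W.subtype A) (Submodule.comap W.subtype B)
    by_cases hzab : Submodule.comap W.subtype w ≤
        Submodule.comap W.subtype A ⊔ Submodule.comap W.subtype B
    · -- Case IV.a : w already inside the join
      have hseq : Submodule.comap W.subtype A ⊔ Submodule.comap W.subtype B ⊔
          Submodule.comap W.subtype w =
          Submodule.comap W.subtype A ⊔ Submodule.comap W.subtype B := sup_eq_left.mpr hzab
      rw [hseq] at hcs
      by_cases hma : qcl rM (Submodule.comap W.subtype A) ∈ μ ⟨e₁, he₁, he₁W⟩
      · have hs : qcl rM (Submodule.comap W.subtype (A ⊔ B)) ∈ μ ⟨e₁, he₁, he₁W⟩ := by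
          rw [hcs]; exact hup _ _ _ hma (qcl_mono hM le_sup_left)
        rw [hr'mem (A ⊔ B) ⟨e₁, he₁, he₁W⟩ he₁S hs, hr'mem A ⟨e₁, he₁, he₁W⟩ he₁A hma,
          hcs, hinf]
        have hBge := (hr'between B ⟨e₂, he₂, he₂W⟩ he₂B).1
        omega
      · by_cases hmb : qcl rM (Submodule.comap W.subtype B) ∈ μ ⟨e₂, he₂, he₂W⟩
        · have hs2 : qcl rM (Submodule.comap W.subtype A ⊔ Submodule.comap W.subtype B) ∈
              μ ⟨e₂, he₂, he₂W⟩ := hup _ _ _ hmb (qcl_mono hM le_sup_right)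
          have hzq : Submodule.comap W.subtype w ≤
              qcl rM (Submodule.comap W.subtype A ⊔ Submodule.comap W.subtype B) :=
            hzab.trans (le_qcl rM _)
          have hs1 := htrans21 _ hzq hs2
          rw [hr'mem (A ⊔ B) ⟨e₁, he₁, he₁W⟩ he₁S (by rw [hcs]; exact hs1),
            hr'nmem A ⟨e₁, he₁, he₁W⟩ he₁A hma, hr'mem B ⟨e₂, he₂, he₂W⟩ he₂B hmb, hcs, hinf]
          omega
        · rw [hr'nmem A ⟨e₁, he₁, he₁W⟩ he₁A hma, hr'nmem B ⟨e₂, he₂, he₂W⟩ he₂B hmb, hinf]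
          have h6 := (hr'between (A ⊔ B) ⟨e₁, he₁, he₁W⟩ he₁S).2
          rw [hcs] at h6
          omega
    · -- Case IV.b : w strictly enlarges the join
      have hrs_le : rM (Submodule.comap W.subtype A ⊔ Submodule.comap W.subtype B ⊔
          Submodule.comap W.subtype w) ≤
          rM (Submodule.comap W.subtype A ⊔ Submodule.comap W.subtype B) + 1 := by
        have h7 := rank_sup_le hM (Submodule.comap W.subtype A ⊔ Submodule.comap W.subtype B)
          (Submodule.comap W.subtype w)
        have h8 := hM.1 (Submodule.comap W.subtype w)
        omega
      by_cases hma : qcl rM (Submodule.comap W.subtype A) ∈ μ ⟨e₁, he₁, he₁W⟩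
      · have hs1 : qcl rM (Submodule.comap W.subtype A ⊔ Submodule.comap W.subtype B ⊔
            Submodule.comap W.subtype w) ∈ μ ⟨e₁, he₁, he₁W⟩ :=
          hup _ _ _ hma (qcl_mono hM (le_sup_left.trans le_sup_left))
        rw [hr'mem (A ⊔ B) ⟨e₁, he₁, he₁W⟩ he₁S (by rw [hcs]; exact hs1),
          hr'mem A ⟨e₁, he₁, he₁W⟩ he₁A hma, hcs, hinf]
        by_cases hmb : qcl rM (Submodule.comap W.subtype B) ∈ μ ⟨e₂, he₂, he₂W⟩
        · rw [hr'mem B ⟨e₂, he₂, he₂W⟩ he₂B hmb]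
          -- goal : rM (a ⊔ b ⊔ cw) + rM (a ⊓ b) ≤ rM a + rM b
          by_cases hza : Submodule.comap W.subtype w ≤ qcl rM (Submodule.comap W.subtype A)
          · have hle : Submodule.comap W.subtype A ⊔ Submodule.comap W.subtype B ⊔
                Submodule.comap W.subtype w ≤
                qcl rM (Submodule.comap W.subtype A) ⊔ Submodule.comap W.subtype B :=
              sup_le (sup_le ((le_qcl rM _).trans le_sup_left) le_sup_right)
                (hza.trans le_sup_left)
            have h9 : rM (Submodule.comap W.subtype A ⊔ Submodule.comap W.subtype B ⊔
                Submodule.comap W.subtype w) ≤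
                rM (Submodule.comap W.subtype A ⊔ Submodule.comap W.subtype B) := by
              have := hM.2.1 _ _ hle
              rwa [rank_qcl_sup hM] at this
            omega
          · by_cases hzb : Submodule.comap W.subtype w ≤ qcl rM (Submodule.comap W.subtype B)
            · have hle : Submodule.comap W.subtype A ⊔ Submodule.comap W.subtype B ⊔
                  Submodule.comap W.subtype w ≤
                  qcl rM (Submodule.comap W.subtype B) ⊔ Submodule.comap W.subtype A :=
                sup_le (sup_le le_sup_right ((le_qcl rM _).trans le_sup_left))
                  (hzb.trans le_sup_left)
              have h9 : rM (Submodule.comap W.subtype A ⊔ Submodule.comap W.subtype B ⊔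
                  Submodule.comap W.subtype w) ≤
                  rM (Submodule.comap W.subtype A ⊔ Submodule.comap W.subtype B) := by
                have h10 := hM.2.1 _ _ hle
                rwa [rank_qcl_sup hM, sup_comm (Submodule.comap W.subtype B) (Submodule.comap W.subtype A)] at h10
              omega
            · rcases hsub.lt_or_eq with hlt | heqq
              · omega
              · rcases hrs_le.lt_or_eq with hlt2 | heq2
                · omega
                · exfalso
                  -- the contradiction case
                  have h9 : rM (Submodule.comap W.subtype A ⊔ Submodule.comap W.subtype w) =
                      rM (Submodule.comap W.subtype A) + 1 := by
                    have hb1 := rank_sup_le hM (Submodule.comap W.subtype A)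
                      (Submodule.comap W.subtype w)
                    have hb2 := hM.1 (Submodule.comap W.subtype w)
                    have hb3 := hM.2.1 _ _ (le_sup_left : Submodule.comap W.subtype A ≤
                      Submodule.comap W.subtype A ⊔ Submodule.comap W.subtype w)
                    have hb4 : rM (Submodule.comap W.subtype A ⊔ Submodule.comap W.subtype w) ≠
                        rM (Submodule.comap W.subtype A) :=
                      fun h => hza (mem_qcl_of hz1 h)
                    omega
                  have h10 : rM (Submodule.comap W.subtype B ⊔ Submodule.comap W.subtype w) =
                      rM (Submodule.comap W.subtype B) + 1 := by
                    have hb1 := rank_sup_le hM (Submodule.comap W.subtype B)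
                      (Submodule.comap W.subtype w)
                    have hb2 := hM.1 (Submodule.comap W.subtype w)
                    have hb3 := hM.2.1 _ _ (le_sup_left : Submodule.comap W.subtype B ≤
                      Submodule.comap W.subtype B ⊔ Submodule.comap W.subtype w)
                    have hb4 : rM (Submodule.comap W.subtype B ⊔ Submodule.comap W.subtype w) ≠
                        rM (Submodule.comap W.subtype B) :=
                      fun h => hzb (mem_qcl_of hz1 h)
                    omega
                  -- F₁ = qcl (a ⊔ cw) in both cuts, F₂ = qcl (b ⊔ cw) in both cuts
                  have hF1mem1 : qcl rM (Submodule.comap W.subtype A ⊔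
                      Submodule.comap W.subtype w) ∈ μ ⟨e₁, he₁, he₁W⟩ :=
                    hup _ _ _ hma (qcl_mono hM le_sup_left)
                  have hzF1 : Submodule.comap W.subtype w ≤
                      qcl rM (Submodule.comap W.subtype A ⊔ Submodule.comap W.subtype w) :=
                    le_sup_right.trans (le_qcl rM _)
                  have hF1mem2 := htrans12 _ hzF1 hF1mem1
                  have hF2mem2 : qcl rM (Submodule.comap W.subtype B ⊔
                      Submodule.comap W.subtype w) ∈ μ ⟨e₂, he₂, he₂W⟩ :=
                    hup _ _ _ hmb (qcl_mono hM le_sup_left)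
                  have hzF2 : Submodule.comap W.subtype w ≤
                      qcl rM (Submodule.comap W.subtype B ⊔ Submodule.comap W.subtype w) :=
                    le_sup_right.trans (le_qcl rM _)
                  have hF2mem1 := htrans21 _ hzF2 hF2mem2
                  -- G = qcl a ⊓ F₂ is in μ e₁ and equals qcl (a ⊓ b)
                  have hjG : rM (qcl rM (Submodule.comap W.subtype A) ⊔
                      qcl rM (Submodule.comap W.subtype B ⊔ Submodule.comap W.subtype w)) =
                      rM (Submodule.comap W.subtype A ⊔ Submodule.comap W.subtype B ⊔
                        Submodule.comap W.subtype w) := by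
                    rw [rank_qcl_sup hM, sup_comm (Submodule.comap W.subtype A),
                      rank_qcl_sup hM, sup_comm (Submodule.comap W.subtype B ⊔
                        Submodule.comap W.subtype w), ← sup_assoc]
                  have hrF2 : rM (qcl rM (Submodule.comap W.subtype B ⊔
                      Submodule.comap W.subtype w)) = rM (Submodule.comap W.subtype B) + 1 := by
                    rw [rank_qcl hM, h10]
                  have hGge : rM (Submodule.comap W.subtype A ⊓ Submodule.comap W.subtype B) ≤
                      rM (qcl rM (Submodule.comap W.subtype A) ⊓
                        qcl rM (Submodule.comap W.subtype B ⊔ Submodule.comap W.subtype w)) :=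
                    hM.2.1 _ _ (le_inf (inf_le_left.trans (le_qcl rM _))
                      (inf_le_right.trans (le_sup_left.trans (le_qcl rM _))))
                  have hGle : rM (qcl rM (Submodule.comap W.subtype A) ⊓
                      qcl rM (Submodule.comap W.subtype B ⊔ Submodule.comap W.subtype w)) ≤
                      rM (Submodule.comap W.subtype A ⊓ Submodule.comap W.subtype B) := by
                    have h11 := hM.2.2 (qcl rM (Submodule.comap W.subtype A))
                      (qcl rM (Submodule.comap W.subtype B ⊔ Submodule.comap W.subtype w))
                    rw [hjG, rank_qcl hM, hrF2] at h11
                    omega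
                  have hGeq := le_antisymm hGle hGge
                  have hmpG : ModularPair rM (qcl rM (Submodule.comap W.subtype A))
                      (qcl rM (Submodule.comap W.subtype B ⊔ Submodule.comap W.subtype w)) := by
                    show rM _ + rM _ = _
                    rw [hjG, hGeq, rank_qcl hM, hrF2]
                    omega
                  have hGmem := (hμ.1 ⟨e₁, he₁, he₁W⟩).2.2 _ hma _ hF2mem1 hmpG
                  have hGflat : IsFlat rM (qcl rM (Submodule.comap W.subtype A) ⊓
                      qcl rM (Submodule.comap W.subtype B ⊔ Submodule.comap W.subtype w)) :=
                    flat_inf hM (qcl_flat hM _) (qcl_flat hM _)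
                  have hqdG : qcl rM (Submodule.comap W.subtype A ⊓ Submodule.comap W.subtype B) =
                      qcl rM (Submodule.comap W.subtype A) ⊓
                        qcl rM (Submodule.comap W.subtype B ⊔ Submodule.comap W.subtype w) := by
                    rw [qcl_eq_qcl hM (le_inf (inf_le_left.trans (le_qcl rM _))
                      (inf_le_right.trans (le_sup_left.trans (le_qcl rM _)))) hGeq.symm,
                      qcl_eq_of_flat hGflat]
                  -- H = qcl b ⊓ F₁ is in μ e₂ and equals qcl (a ⊓ b)
                  have hjH : rM (qcl rM (Submodule.comap W.subtype B) ⊔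
                      qcl rM (Submodule.comap W.subtype A ⊔ Submodule.comap W.subtype w)) =
                      rM (Submodule.comap W.subtype A ⊔ Submodule.comap W.subtype B ⊔
                        Submodule.comap W.subtype w) := by
                    rw [rank_qcl_sup hM, sup_comm (Submodule.comap W.subtype B),
                      rank_qcl_sup hM, sup_right_comm]
                  have hrF1 : rM (qcl rM (Submodule.comap W.subtype A ⊔
                      Submodule.comap W.subtype w)) = rM (Submodule.comap W.subtype A) + 1 := by
                    rw [rank_qcl hM, h9]
                  have hHge : rM (Submodule.comap W.subtype A ⊓ Submodule.comap W.subtype B) ≤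
                      rM (qcl rM (Submodule.comap W.subtype B) ⊓
                        qcl rM (Submodule.comap W.subtype A ⊔ Submodule.comap W.subtype w)) :=
                    hM.2.1 _ _ (le_inf (inf_le_right.trans (le_qcl rM _))
                      (inf_le_left.trans (le_sup_left.trans (le_qcl rM _))))
                  have hHle : rM (qcl rM (Submodule.comap W.subtype B) ⊓
                      qcl rM (Submodule.comap W.subtype A ⊔ Submodule.comap W.subtype w)) ≤
                      rM (Submodule.comap W.subtype A ⊓ Submodule.comap W.subtype B) := by
                    have h11 := hM.2.2 (qcl rM (Submodule.comap W.subtype B))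
                      (qcl rM (Submodule.comap W.subtype A ⊔ Submodule.comap W.subtype w))
                    rw [hjH, rank_qcl hM, hrF1] at h11
                    omega
                  have hHeq := le_antisymm hHle hHge
                  have hmpH : ModularPair rM (qcl rM (Submodule.comap W.subtype B))
                      (qcl rM (Submodule.comap W.subtype A ⊔ Submodule.comap W.subtype w)) := by
                    show rM _ + rM _ = _
                    rw [hjH, hHeq, rank_qcl hM, hrF1]
                    omega
                  have hHmem := (hμ.1 ⟨e₂, he₂, he₂W⟩).2.2 _ hmb _ hF1mem2 hmpH
                  have hHflat : IsFlat rM (qcl rM (Submodule.comap W.subtype B) ⊓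
                      qcl rM (Submodule.comap W.subtype A ⊔ Submodule.comap W.subtype w)) :=
                    flat_inf hM (qcl_flat hM _) (qcl_flat hM _)
                  have hqdH : qcl rM (Submodule.comap W.subtype A ⊓ Submodule.comap W.subtype B) =
                      qcl rM (Submodule.comap W.subtype B) ⊓
                        qcl rM (Submodule.comap W.subtype A ⊔ Submodule.comap W.subtype w) := by
                    rw [qcl_eq_qcl hM (le_inf (inf_le_right.trans (le_qcl rM _))
                      (inf_le_left.trans (le_sup_left.trans (le_qcl rM _)))) hHeq.symm,
                      qcl_eq_of_flat hHflat]
                  have hd1 : qcl rM (Submodule.comap W.subtype A ⊓ Submodule.comap W.subtype B) ∈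
                      μ ⟨e₁, he₁, he₁W⟩ := by rw [hqdG]; exact hGmem
                  have hd2 : qcl rM (Submodule.comap W.subtype A ⊓ Submodule.comap W.subtype B) ∈
                      μ ⟨e₂, he₂, he₂W⟩ := by rw [hqdH]; exact hHmem
                  have hzd := hzmem _ hd1 hd2
                  exact hza (hzd.trans (qcl_mono hM inf_le_left))
        · rw [hr'nmem B ⟨e₂, he₂, he₂W⟩ he₂B hmb]
          omega
      · by_cases hmb : qcl rM (Submodule.comap W.subtype B) ∈ μ ⟨e₂, he₂, he₂W⟩
        · have hs2 : qcl rM (Submodule.comap W.subtype A ⊔ Submodule.comap W.subtype B ⊔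
              Submodule.comap W.subtype w) ∈ μ ⟨e₂, he₂, he₂W⟩ :=
            hup _ _ _ hmb (qcl_mono hM (le_sup_right.trans le_sup_left))
          have hzs : Submodule.comap W.subtype w ≤
              qcl rM (Submodule.comap W.subtype A ⊔ Submodule.comap W.subtype B ⊔
                Submodule.comap W.subtype w) := le_sup_right.trans (le_qcl rM _)
          have hs1 := htrans21 _ hzs hs2
          rw [hr'mem (A ⊔ B) ⟨e₁, he₁, he₁W⟩ he₁S (by rw [hcs]; exact hs1),
            hr'nmem A ⟨e₁, he₁, he₁W⟩ he₁A hma, hr'mem B ⟨e₂, he₂, he₂W⟩ he₂B hmb, hcs, hinf]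
          omega
        · rw [hr'nmem A ⟨e₁, he₁, he₁W⟩ he₁A hma, hr'nmem B ⟨e₂, he₂, he₂W⟩ he₂B hmb, hinf]
          have h6 := (hr'between (A ⊔ B) ⟨e₁, he₁, he₁W⟩ he₁S).2
          rw [hcs] at h6
          omega
  -- assemble R3
  have R3 : ∀ A B : Submodule K V, r' (A ⊔ B) + r' (A ⊓ B) ≤ r' A + r' B := by
    intro A B
    by_cases hA : A ≤ W
    · by_cases hB : B ≤ W
      · have hsupI : Submodule.comap W.subtype (A ⊔ B) =
            Submodule.comap W.subtype A ⊔ Submodule.comap W.subtype B := by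
          apply minj
          rw [Submodule.map_sup, hco A hA, hco B hB, Submodule.map_comap_subtype]
          exact inf_eq_right.mpr (sup_le hA hB)
        rw [hr'W A hA, hr'W B hB, hr'W (A ⊔ B) (sup_le hA hB),
          hr'W (A ⊓ B) (inf_le_left.trans hA), hsupI, Submodule.comap_inf A B W.subtype]
        exact hM.2.2 _ _
      · exact caseII A B hA hB
    · by_cases hB : B ≤ W
      · have h := caseII B A hB hA
        rw [sup_comm B A, inf_comm B A] at h
        omega
      · by_cases hAB : A ⊓ B ≤ W
        · exact caseIV A B hA hB hAB
        · exact caseIII A B hA hB hAB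
  refine ⟨⟨R1, R2, R3⟩, h₁, ?_⟩
  -- the flats statement
  intro e
  ext F
  simp only [Set.mem_setOf_eq]
  constructor
  · rintro ⟨hF, _, hr⟩
    by_cases hm : qcl rM F ∈ μ e
    · rwa [qcl_eq_of_flat hF] at hm
    · exfalso
      have hbad := (h₂ F e).2 hm
      rw [h₁ F] at hr
      omega
  · intro hFmem
    have hF : IsFlat rM F := (hμ.1 e).1 F hFmem
    have hm : qcl rM F ∈ μ e := by rw [qcl_eq_of_flat hF]; exact hFmem
    have hrr : r' (Submodule.map W.subtype F ⊔ (e : Submodule K V)) = rM F := (h₂ F e).1 hm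
    refine ⟨hF, ?_, by rw [hrr, h₁ F]⟩
    intro x hx hxn
    by_cases hxW : x ≤ W
    · have hmx : Submodule.map W.subtype (Submodule.comap W.subtype x) = x := hco x hxW
      have hx0 : OneDim (Submodule.comap W.subtype x) := honecomap x hxW hx
      have hxF : ¬ Submodule.comap W.subtype x ≤ F := by
        intro h
        apply hxn
        have h1 := hmapmono h
        rw [hmx] at h1
        exact h1.trans le_sup_left
      have hTX : Submodule.map W.subtype F ⊔ (e : Submodule K V) ⊔ x =
          Submodule.map W.subtype (F ⊔ Submodule.comap W.subtype x) ⊔ (e : Submodule K V) := by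
        rw [Submodule.map_sup, hmx, sup_right_comm]
      have hrx : rM F < rM (F ⊔ Submodule.comap W.subtype x) := hF _ hx0 hxF
      have hcc : Submodule.comap W.subtype
          (Submodule.map W.subtype (F ⊔ Submodule.comap W.subtype x) ⊔ (e : Submodule K V)) =
          F ⊔ Submodule.comap W.subtype x := hcomap_eq _ _ e rfl
      have hhi := (hr'between (Submodule.map W.subtype (F ⊔ Submodule.comap W.subtype x) ⊔
        (e : Submodule K V)) e le_sup_right).1
      rw [hcc] at hhi
      rw [hrr, hTX]
      omega
    · have hxe : x ≠ (e : Submodule K V) := fun h => hxn (h ▸ le_sup_right)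
      obtain ⟨w, hw1, hwW, hwe, hwx⟩ :=
        exists_wline W hdim e.2.1 e.2.2 hx hxW (fun h => hxe h.symm)
      have hmz : Submodule.map W.subtype (Submodule.comap W.subtype w) = w := hco w hwW
      have hz1 : OneDim (Submodule.comap W.subtype w) := honecomap w hwW hw1
      have hzF : ¬ Submodule.comap W.subtype w ≤ F := by
        intro h
        apply hxn
        have hwF : w ≤ Submodule.map W.subtype F := by
          have h1 := hmapmono h
          rwa [hmz] at h1
        have h2 : x ≤ (e : Submodule K V) ⊔ w := by rw [hwe]; exact le_sup_right
        exact h2.trans (sup_le le_sup_right (hwF.trans le_sup_left))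
      have hT : Submodule.map W.subtype F ⊔ (e : Submodule K V) ⊔ x =
          Submodule.map W.subtype (F ⊔ Submodule.comap W.subtype w) ⊔ (e : Submodule K V) := by
        rw [Submodule.map_sup, hmz]
        calc Submodule.map W.subtype F ⊔ (e : Submodule K V) ⊔ x
            = Submodule.map W.subtype F ⊔ ((e : Submodule K V) ⊔ x) := sup_assoc _ _ _
          _ = Submodule.map W.subtype F ⊔ ((e : Submodule K V) ⊔ w) := by rw [hwe]
          _ = Submodule.map W.subtype F ⊔ w ⊔ (e : Submodule K V) := by
              rw [← sup_assoc, sup_right_comm]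
      have hrz : rM F < rM (F ⊔ Submodule.comap W.subtype w) := hF _ hz1 hzF
      have hcc : Submodule.comap W.subtype
          (Submodule.map W.subtype (F ⊔ Submodule.comap W.subtype w) ⊔ (e : Submodule K V)) =
          F ⊔ Submodule.comap W.subtype w := hcomap_eq _ _ e rfl
      have hhi := (hr'between (Submodule.map W.subtype (F ⊔ Submodule.comap W.subtype w) ⊔
        (e : Submodule K V)) e le_sup_right).1
      rw [hcc] at hhi
      rw [hrr, hT]
      omega
end

section
/- Let N=(E',r_N) be a one-dimensional extension of a q-matroid M=(E,r_M) by a one-dimensional subspace e of E' not contained in E. Then the set 𝓜 = {F ∈ F_M : F + e is a flat of N and r_N(F + e) = r_N(F)} satisfies: (M1) if F ∈ 𝓜 and F' is a flat of M containing F, then F' ∈ 𝓜; and (M2) if F1, F2 ∈ 𝓜 and (F1,F2) is a modular pair of M, then F1 ∩ F2 ∈ 𝓜. -/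
open Module Submodule

variable {K V V₁ V₂ : Type*}

section Aux

variable [Field K] [AddCommGroup V] [Module K V] [FiniteDimensional K V]

lemma aux_top (W e : Submodule K V) (he₁ : OneDim e) (he₂ : ¬ e ≤ W)
    (hdim : Module.finrank K V = Module.finrank K ↥W + 1) : W ⊔ e = ⊤ := by
  have hbot : W ⊓ e = ⊥ := by
    by_contra h
    have h1 : 0 < Module.finrank K ↥(W ⊓ e) := by
      rw [pos_iff_ne_zero, ne_eq, Submodule.finrank_eq_zero]; exact h
    have h2 : Module.finrank K ↥e ≤ Module.finrank K ↥(W ⊓ e) := by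
      rw [he₁]; omega
    have := Submodule.eq_of_le_of_finrank_le (inf_le_right : W ⊓ e ≤ e) h2
    exact he₂ (this ▸ (inf_le_left : W ⊓ e ≤ W))
  apply Submodule.eq_top_of_finrank_eq
  have h := Submodule.finrank_sup_add_finrank_inf_eq W e
  rw [hbot, finrank_bot, he₁] at h
  omega

lemma aux_rank_sup (rN : Submodule K V → ℕ) (hN : IsQMatroid rN)
    (A B e : Submodule K V) (hAB : A ≤ B) (h : rN (A ⊔ e) = rN A) :
    rN (B ⊔ e) = rN B := by
  have hsub := hN.2.2 B (A ⊔ e)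
  have heq : B ⊔ (A ⊔ e) = B ⊔ e := by rw [← sup_assoc, sup_eq_left.mpr hAB]
  rw [heq] at hsub
  have hA : rN A ≤ rN (B ⊓ (A ⊔ e)) := hN.2.1 _ _ (le_inf hAB le_sup_left)
  have hmono : rN B ≤ rN (B ⊔ e) := hN.2.1 _ _ le_sup_left
  omega

lemma aux_flat_inf {W : Type*} [AddCommGroup W] [Module K W]
    (rM : Submodule K W → ℕ) (hM : IsQMatroid rM)
    (F₁ F₂ : Submodule K W) (h₁ : IsFlat rM F₁) (h₂ : IsFlat rM F₂) :
    IsFlat rM (F₁ ⊓ F₂) := by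
  intro x hx hxle
  have hmono : rM (F₁ ⊓ F₂) ≤ rM ((F₁ ⊓ F₂) ⊔ x) := hM.2.1 _ _ le_sup_left
  rcases hmono.lt_or_eq with h | h
  · exact h
  · exfalso
    have key : ∀ F : Submodule K W, IsFlat rM F → F₁ ⊓ F₂ ≤ F → x ≤ F := by
      intro F hF hle
      by_contra hnle
      have hsub := hM.2.2 F ((F₁ ⊓ F₂) ⊔ x)
      have heq : F ⊔ ((F₁ ⊓ F₂) ⊔ x) = F ⊔ x := by
        rw [← sup_assoc, sup_eq_left.mpr hle]
      rw [heq] at hsub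
      have hA : rM (F₁ ⊓ F₂) ≤ rM (F ⊓ ((F₁ ⊓ F₂) ⊔ x)) :=
        hM.2.1 _ _ (le_inf hle le_sup_left)
      have := hF x hx hnle
      omega
    exact hxle (le_inf (key F₁ h₁ inf_le_left) (key F₂ h₂ inf_le_right))

lemma aux_flat_sup (W : Submodule K V) (rM : Submodule K ↥W → ℕ)
    (rN : Submodule K V → ℕ) (hN : IsQMatroid rN)
    (hrest : ∀ X : Submodule K ↥W, rN (Submodule.map W.subtype X) = rM X)
    (e : Submodule K V) (htop : W ⊔ e = ⊤)
    (F : Submodule K ↥W) (hF : IsFlat rM F)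
    (hr : rN (Submodule.map W.subtype F ⊔ e) = rN (Submodule.map W.subtype F)) :
    IsFlat rN (Submodule.map W.subtype F ⊔ e) := by
  intro x hx hxle
  set Fh := Submodule.map W.subtype F with hFh
  set G := Fh ⊔ e with hG
  have hsub : x ≤ ((G ⊔ x) ⊓ W) ⊔ e := by
    intro v hv
    have hvt : v ∈ W ⊔ e := by rw [htop]; exact Submodule.mem_top
    obtain ⟨w, hw, u, hu, huv⟩ := Submodule.mem_sup.mp hvt
    have hwGx : w ∈ (G ⊔ x) ⊓ W := by
      refine ⟨?_, hw⟩
      have hvx : v ∈ G ⊔ x := Submodule.mem_sup_right hv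
      have huG : u ∈ G ⊔ x :=
        Submodule.mem_sup_left (Submodule.mem_sup_right hu)
      have hwe : w = v - u := by rw [← huv]; abel
      rw [hwe]; exact Submodule.sub_mem _ hvx huG
    have hve : v = w + u := huv.symm
    rw [hve]
    exact Submodule.add_mem _ (Submodule.mem_sup_left hwGx)
      (Submodule.mem_sup_right hu)
  have hnle : ¬ ((G ⊔ x) ⊓ W ≤ Fh) := by
    intro h
    exact hxle (hsub.trans (sup_le_sup_right h e))
  obtain ⟨v, hvmem, hvF⟩ := SetLike.not_le_iff_exists.mp hnle
  have hv0 : v ≠ 0 := fun h0 => hvF (h0 ▸ Submodule.zero_mem Fh)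
  set y : Submodule K V := Submodule.span K {v} with hy
  have hy1 : OneDim y := finrank_span_singleton hv0
  have hyW : y ≤ W := Submodule.span_le.mpr (Set.singleton_subset_iff.mpr hvmem.2)
  have hyGx : y ≤ G ⊔ x := Submodule.span_le.mpr (Set.singleton_subset_iff.mpr hvmem.1)
  set y' := Submodule.comap W.subtype y with hy'
  have hmapy : Submodule.map W.subtype y' = y := by
    rw [hy', Submodule.map_comap_eq, Submodule.range_subtype, inf_eq_right.mpr hyW]
  have hy'1 : OneDim y' := by
    have := LinearEquiv.finrank_eq (Submodule.comapSubtypeEquivOfLe hyW)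
    unfold OneDim
    rw [this]; exact hy1
  have hy'F : ¬ y' ≤ F := by
    intro h
    have hm : Submodule.map W.subtype y' ≤ Submodule.map W.subtype F :=
      Submodule.map_mono h
    rw [hmapy] at hm
    exact hvF (hm (Submodule.mem_span_singleton_self v))
  have hlt := hF y' hy'1 hy'F
  have h1 : rN (Fh ⊔ y) = rM (F ⊔ y') := by
    rw [← hrest, Submodule.map_sup, hmapy]
  have h2 : Fh ⊔ y ≤ G ⊔ x :=
    sup_le (le_sup_left.trans (le_sup_left : G ≤ G ⊔ x)) hyGx
  calc rN G = rM F := by rw [hG, hr, hFh, hrest]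
    _ < rM (F ⊔ y') := hlt
    _ = rN (Fh ⊔ y) := h1.symm
    _ ≤ rN (G ⊔ x) := hN.2.1 _ _ h2

end Aux


/-- for a one-dimensional extension `rN` of the q-matroid `rM`
by `e`, the set `𝓜 = {F ∈ F_M : F + e ∈ F_N and r_N(F+e) = r_N(F)}` satisfies
(M1) and (M2). -/

theorem stmt2 [Field K] [Fintype K] [AddCommGroup V] [Module K V] [FiniteDimensional K V]
    (W : Submodule K V) (hdim : Module.finrank K V = Module.finrank K ↥W + 1)
    (rM : Submodule K ↥W → ℕ) (hM : IsQMatroid rM)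
    (rN : Submodule K V → ℕ) (hN : IsQMatroid rN)
    (hrest : ∀ X : Submodule K ↥W, rN (Submodule.map W.subtype X) = rM X)
    (e : Submodule K V) (he₁ : OneDim e) (he₂ : ¬ e ≤ W)
    (M : Set (Submodule K ↥W))
    (hMdef : M = {F : Submodule K ↥W | IsFlat rM F ∧
      IsFlat rN (Submodule.map W.subtype F ⊔ e) ∧
      rN (Submodule.map W.subtype F ⊔ e) = rN (Submodule.map W.subtype F)}) :
    (∀ F ∈ M, ∀ F' : Submodule K ↥W, IsFlat rM F' → F ≤ F' → F' ∈ M) ∧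
    (∀ F₁ ∈ M, ∀ F₂ ∈ M, ModularPair rM F₁ F₂ → F₁ ⊓ F₂ ∈ M) := by
  subst hMdef
  have htop : W ⊔ e = ⊤ := aux_top W e he₁ he₂ hdim
  constructor
  · rintro F ⟨hFflat, hFNflat, hFr⟩ F' hF'flat hle
    have hle' : Submodule.map W.subtype F ≤ Submodule.map W.subtype F' :=
      Submodule.map_mono hle
    have hr' : rN (Submodule.map W.subtype F' ⊔ e) = rN (Submodule.map W.subtype F') :=
      aux_rank_sup rN hN _ _ e hle' hFr
    exact ⟨hF'flat, aux_flat_sup W rM rN hN hrest e htop F' hF'flat hr', hr'⟩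
  · rintro F₁ ⟨h₁flat, h₁Nflat, h₁r⟩ F₂ ⟨h₂flat, h₂Nflat, h₂r⟩ hmp
    have h0flat : IsFlat rM (F₁ ⊓ F₂) := aux_flat_inf rM hM F₁ F₂ h₁flat h₂flat
    set F₀ := F₁ ⊓ F₂ with hF₀
    set A := Submodule.map W.subtype F₁ ⊔ e with hA
    set B := Submodule.map W.subtype F₂ ⊔ e with hB
    have hsub := hN.2.2 A B
    have hAB : A ⊔ B = Submodule.map W.subtype (F₁ ⊔ F₂) ⊔ e := by
      rw [hA, hB, Submodule.map_sup, sup_sup_sup_comm, sup_idem]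
    have hle0 : Submodule.map W.subtype F₀ ⊔ e ≤ A ⊓ B :=
      le_inf (sup_le_sup_right (Submodule.map_mono inf_le_left) e)
        (sup_le_sup_right (Submodule.map_mono inf_le_right) e)
    have h3 : rN (Submodule.map W.subtype F₀ ⊔ e) ≤ rN (A ⊓ B) := hN.2.1 _ _ hle0
    have h4 : rM (F₁ ⊔ F₂) ≤ rN (A ⊔ B) := by
      rw [hAB, ← hrest]
      exact hN.2.1 _ _ le_sup_left
    have h5 : rN A = rM F₁ := by rw [hA, h₁r, hrest]
    have h6 : rN B = rM F₂ := by rw [hB, h₂r, hrest]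
    have hmp' := hmp
    unfold ModularPair at hmp'
    rw [← hF₀] at hmp'
    have h7 : rN (Submodule.map W.subtype F₀ ⊔ e) ≤ rM F₀ := by omega
    have h8 : rM F₀ ≤ rN (Submodule.map W.subtype F₀ ⊔ e) := by
      rw [← hrest]
      exact hN.2.1 _ _ le_sup_left
    have h0r : rN (Submodule.map W.subtype F₀ ⊔ e) = rN (Submodule.map W.subtype F₀) := by
      rw [hrest]; omega
    exact ⟨h0flat, aux_flat_sup W rM rN hN hrest e htop F₀ h0flat h0r, h0r⟩
end

section
/- Let M=(E,r_M) be a q-matroid, E' a vector space over F_q containing E with dim E' = dim E + 1, and μ a modular cut selector of M. Suppose r' is a nonnegative-integer-valued function on the subspaces of E' with r'(X) = r_M(X) for all X ≤ E and r'(X + e) = r_M(X) + δ_{X,e} for all X ≤ E and one-dimensional subspaces e of E' not contained in E, where δ_{X,e} = 0 if cl_M(X) ∈ μ(e) and δ_{X,e} = 1 otherwise. Then r' satisfies (R1): 0 ≤ r'(Z) ≤ dim Z for every subspace Z ≤ E', and (R2): r'(Z1) ≤ r'(Z2) whenever Z1 ≤ Z2 ≤ E'. -/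
open Module Submodule

variable {K V V₁ V₂ : Type*}

set_option maxHeartbeats 2000000 in
/-- the function `r'` defined from a modular cut selector
satisfies (R1) and (R2). -/
theorem stmt4 [Field K] [Fintype K] [AddCommGroup V] [Module K V] [FiniteDimensional K V]
    (W : Submodule K V) (hdim : Module.finrank K V = Module.finrank K ↥W + 1)
    (rM : Submodule K ↥W → ℕ) (hM : IsQMatroid rM)
    (μ : Delta W → Set (Submodule K ↥W)) (hμ : IsMCS W rM μ)
    (r' : Submodule K V → ℕ)
    (h₁ : ∀ X : Submodule K ↥W, r' (Submodule.map W.subtype X) = rM X)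
    (h₂ : ∀ X : Submodule K ↥W, ∀ e : Delta W,
      (qcl rM X ∈ μ e → r' (Submodule.map W.subtype X ⊔ (e : Submodule K V)) = rM X) ∧
      (qcl rM X ∉ μ e → r' (Submodule.map W.subtype X ⊔ (e : Submodule K V)) = rM X + 1)) :
    (∀ Z : Submodule K V, r' Z ≤ Module.finrank K Z) ∧
    (∀ Z₁ Z₂ : Submodule K V, Z₁ ≤ Z₂ → r' Z₁ ≤ r' Z₂) := by

  obtain ⟨hr1, hr2, hr3⟩ := hM
  -- equal ranks on nested subspaces give equal closures
  have clEq : ∀ X Y : Submodule K ↥W, X ≤ Y → rM X = rM Y → qcl rM X = qcl rM Y := by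
    intro X Y hXY hr
    have key : ∀ x : Submodule K ↥W, (rM (X ⊔ x) = rM X ↔ rM (Y ⊔ x) = rM Y) := by
      intro x
      have h5 : X ⊔ x ⊔ Y = Y ⊔ x := by
        rw [sup_right_comm, sup_eq_right.mpr hXY]
      have hs := hr3 (X ⊔ x) Y
      rw [h5] at hs
      have h4 : rM X ≤ rM ((X ⊔ x) ⊓ Y) := hr2 _ _ (le_inf le_sup_left hXY)
      have hm1 : rM X ≤ rM (X ⊔ x) := hr2 _ _ le_sup_left
      have hm2 : rM Y ≤ rM (Y ⊔ x) := hr2 _ _ le_sup_left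
      have hm3 : rM (X ⊔ x) ≤ rM (Y ⊔ x) := hr2 _ _ (sup_le_sup_right hXY x)
      omega
    unfold qcl
    congr 1
    ext x
    simp only [Set.mem_setOf_eq]
    rw [key x]
  -- decomposition of a subspace not contained in W
  have decomp : ∀ Z e : Submodule K V, OneDim e → ¬ e ≤ W → e ≤ Z →
      Submodule.map W.subtype (Submodule.comap W.subtype Z) ⊔ e = Z := by
    intro Z e he heW heZ
    obtain ⟨v, hv, hv0⟩ := Submodule.exists_mem_ne_zero_of_ne_bot (p := e) (by
      rintro rfl; simp [OneDim] at he)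
    have hspan : Submodule.span K {v} = e := by
      apply Submodule.eq_of_le_of_finrank_le
      · rwa [Submodule.span_singleton_le_iff_mem]
      · rw [he, finrank_span_singleton hv0]
    have hvW : v ∉ W := fun h => heW (hspan ▸ (Submodule.span_singleton_le_iff_mem v W).mpr h)
    have hvZ : v ∈ Z := heZ hv
    rw [Submodule.map_comap_subtype]
    apply le_antisymm (sup_le inf_le_right heZ)
    have htop : W ⊔ e = ⊤ := by
      apply Submodule.eq_top_of_finrank_eq
      have hlt : W < W ⊔ e := lt_of_le_of_ne le_sup_left (by
        intro h; exact heW (h ▸ le_sup_right))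
      have := Submodule.finrank_lt_finrank_of_lt hlt
      have h2 := Submodule.finrank_le (W ⊔ e)
      omega
    intro z hz
    have hz' : z ∈ W ⊔ e := htop ▸ Submodule.mem_top
    obtain ⟨w, hw, u, hu, rfl⟩ := Submodule.mem_sup.mp hz'
    have hwZ : w ∈ Z := by
      have huZ : u ∈ Z := heZ hu
      have : w + u - u ∈ Z := Z.sub_mem hz huZ
      simpa using this
    exact Submodule.mem_sup.mpr ⟨w, ⟨hw, hwZ⟩, u, hu, rfl⟩
  -- e ⊓ W = ⊥ for e ∈ Delta
  have einf : ∀ e : Submodule K V, OneDim e → ¬ e ≤ W → ∀ X : Submodule K ↥W,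
      Module.finrank K ↥(Submodule.map W.subtype X ⊔ e) = Module.finrank K X + 1 := by
    intro e he heW X
    have hbot : Submodule.map W.subtype X ⊓ e = ⊥ := by
      by_contra hne
      obtain ⟨v, hv, hv0⟩ := Submodule.exists_mem_ne_zero_of_ne_bot hne
      have hspan : Submodule.span K {v} = e := by
        apply Submodule.eq_of_le_of_finrank_le
        · rw [Submodule.span_singleton_le_iff_mem]; exact hv.2
        · rw [he, finrank_span_singleton hv0]
      apply heW
      rw [← hspan, Submodule.span_singleton_le_iff_mem]
      exact Submodule.map_subtype_le W X hv.1
    have := Submodule.finrank_sup_add_finrank_inf_eq (Submodule.map W.subtype X) e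
    rw [hbot] at this
    simp only [finrank_bot] at this
    have hmap : Module.finrank K ↥(Submodule.map W.subtype X) = Module.finrank K X :=
      (Submodule.equivSubtypeMap W X).symm.finrank_eq
    rw [he, hmap] at this
    omega
  have hmapeq : ∀ Z : Submodule K V, Z ≤ W →
      Submodule.map W.subtype (Submodule.comap W.subtype Z) = Z := by
    intro Z hZ
    rw [Submodule.map_comap_subtype, inf_eq_right.mpr hZ]
  have exDel : ∀ Z : Submodule K V, ¬ Z ≤ W →
      ∃ e : Submodule K V, OneDim e ∧ ¬ e ≤ W ∧ e ≤ Z := by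
    intro Z hZ
    rw [SetLike.le_def] at hZ
    push_neg at hZ
    obtain ⟨v, hvZ, hvW⟩ := hZ
    have hv0 : v ≠ 0 := by rintro rfl; exact hvW (zero_mem W)
    refine ⟨Submodule.span K {v}, finrank_span_singleton hv0, ?_, ?_⟩
    · rw [Submodule.span_singleton_le_iff_mem]; exact hvW
    · rw [Submodule.span_singleton_le_iff_mem]; exact hvZ
  have hfr : ∀ Z : Submodule K V, Z ≤ W →
      Module.finrank K ↥(Submodule.comap W.subtype Z) = Module.finrank K Z := by
    intro Z hZ
    conv_rhs => rw [← hmapeq Z hZ]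
    exact (Submodule.equivSubtypeMap W (Submodule.comap W.subtype Z)).finrank_eq
  constructor
  · -- (R1)
    intro Z
    by_cases hZ : Z ≤ W
    · have e1 : r' Z = rM (Submodule.comap W.subtype Z) := by
        conv_lhs => rw [← hmapeq Z hZ]
        rw [h₁]
      rw [e1, ← hfr Z hZ]
      exact hr1 _
    · obtain ⟨e, he1, he2, he3⟩ := exDel Z hZ
      set X := Submodule.comap W.subtype Z with hX
      have hdec := decomp Z e he1 he2 he3
      have hfin : Module.finrank K Z = Module.finrank K X + 1 := by
        rw [← hdec]; exact (einf e he1 he2 X)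
      set e' : ↥(Delta W) := ⟨e, he1, he2⟩ with he'
      have hcoe : (e' : Submodule K V) = e := rfl
      by_cases hc : qcl rM X ∈ μ e'
      · have := (h₂ X e').1 hc
        rw [hcoe, hdec] at this
        rw [this, hfin]
        have := hr1 X
        omega
      · have := (h₂ X e').2 hc
        rw [hcoe, hdec] at this
        rw [this, hfin]
        have := hr1 X
        omega
  · -- (R2)
    intro Z₁ Z₂ h12
    by_cases h1 : Z₁ ≤ W
    · by_cases h2 : Z₂ ≤ W
      · rw [← hmapeq Z₁ h1, ← hmapeq Z₂ h2, h₁, h₁]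
        exact hr2 _ _ (Submodule.comap_mono h12)
      · obtain ⟨e, he1, he2, he3⟩ := exDel Z₂ h2
        set X₁ := Submodule.comap W.subtype Z₁
        set X₂ := Submodule.comap W.subtype Z₂
        have hdec := decomp Z₂ e he1 he2 he3
        have hle : rM X₁ ≤ rM X₂ := hr2 _ _ (Submodule.comap_mono h12)
        have hZ1 : r' Z₁ = rM X₁ := by rw [← hmapeq Z₁ h1, h₁]
        set e' : ↥(Delta W) := ⟨e, he1, he2⟩ with he'
        have hcoe : (e' : Submodule K V) = e := rfl
        by_cases hc : qcl rM X₂ ∈ μ e'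
        · have := (h₂ X₂ e').1 hc
          rw [hcoe, hdec] at this
          omega
        · have := (h₂ X₂ e').2 hc
          rw [hcoe, hdec] at this
          omega
    · have h2 : ¬ Z₂ ≤ W := fun h => h1 (h12.trans h)
      obtain ⟨e, he1, he2, he3⟩ := exDel Z₁ h1
      set X₁ := Submodule.comap W.subtype Z₁
      set X₂ := Submodule.comap W.subtype Z₂
      have hdec1 := decomp Z₁ e he1 he2 he3
      have hdec2 := decomp Z₂ e he1 he2 (he3.trans h12)
      have hX12 : X₁ ≤ X₂ := Submodule.comap_mono h12
      have hle : rM X₁ ≤ rM X₂ := hr2 _ _ hX12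
      set e' : ↥(Delta W) := ⟨e, he1, he2⟩ with he'
      have hcoe : (e' : Submodule K V) = e := rfl
      by_cases hc1 : qcl rM X₁ ∈ μ e' <;> by_cases hc2 : qcl rM X₂ ∈ μ e'
      · have t1 := (h₂ X₁ e').1 hc1
        have t2 := (h₂ X₂ e').1 hc2
        rw [hcoe, hdec1] at t1; rw [hcoe, hdec2] at t2
        omega
      · have t1 := (h₂ X₁ e').1 hc1
        have t2 := (h₂ X₂ e').2 hc2
        rw [hcoe, hdec1] at t1; rw [hcoe, hdec2] at t2
        omega
      · -- qcl X₁ ∉ μ e', qcl X₂ ∈ μ e': must have rM X₁ < rM X₂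
        have t1 := (h₂ X₁ e').2 hc1
        have t2 := (h₂ X₂ e').1 hc2
        rw [hcoe, hdec1] at t1; rw [hcoe, hdec2] at t2
        have hlt : rM X₁ < rM X₂ := by
          rcases lt_or_eq_of_le hle with h | h
          · exact h
          · exact absurd (clEq X₁ X₂ hX12 h ▸ hc2) hc1
        omega
      · have t1 := (h₂ X₁ e').2 hc1
        have t2 := (h₂ X₂ e').2 hc2
        rw [hcoe, hdec1] at t1; rw [hcoe, hdec2] at t2
        omega
end

section
/- Let M=(E,r_M) be a q-matroid, E' a vector space over F_q containing E with dim E' = dim E + 1, and μ a modular cut selector of M. Suppose r' is a nonnegative-integer-valued function on the subspaces of E' with r'(X) = r_M(X) for all X ≤ E and r'(X + e) = r_M(X) + δ_{X,e} for all X ≤ E and one-dimensional subspaces e of E' not contained in E, where δ_{X,e} = 0 if cl_M(X) ∈ μ(e) and δ_{X,e} = 1 otherwise. Then r' satisfies the submodularity axiom (R3): r'(Z1 + Z2) + r'(Z1 ∩ Z2) ≤ r'(Z1) + r'(Z2) for all subspaces Z1, Z2 ≤ E'. -/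
open Module Submodule

variable {K V V₁ V₂ : Type*}

namespace QAux

variable {K V : Type*}

section Rank

variable [Field K] [Fintype K] [AddCommGroup V] [Module K V] [FiniteDimensional K V]
variable {r : Submodule K V → ℕ}

lemma finite_submodule : Finite (Submodule K V) := by
  haveI : Finite V := Module.finite_of_finite K
  exact Finite.of_injective (fun p : Submodule K V => (p : Set V)) SetLike.coe_injective

lemma absorb (hr : IsQMatroid r) {X Y s : Submodule K V} (hXY : X ≤ Y)
    (h : r (X ⊔ s) = r X) : r (Y ⊔ s) = r Y := by
  have h1 := hr.2.2 Y (X ⊔ s)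
  have h2 : Y ⊔ (X ⊔ s) = Y ⊔ s := by rw [← sup_assoc, sup_eq_left.mpr hXY]
  rw [h2, h] at h1
  have h3 : r X ≤ r (Y ⊓ (X ⊔ s)) := hr.2.1 _ _ (le_inf hXY le_sup_left)
  have h4 : r Y ≤ r (Y ⊔ s) := hr.2.1 _ _ le_sup_left
  omega

lemma r_sup_finset (hr : IsQMatroid r) (X : Submodule K V) (T : Finset (Submodule K V))
    (h : ∀ s ∈ T, r (X ⊔ s) = r X) : r (X ⊔ T.sup id) = r X := by
  classical
  induction T using Finset.induction_on with
  | empty => simp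
  | @insert a T ha ih =>
    rw [Finset.sup_insert]
    have h1 := ih (fun s hs => h s (Finset.mem_insert_of_mem hs))
    have h2 := h a (Finset.mem_insert_self a T)
    have h3 := hr.2.2 (X ⊔ a) (X ⊔ T.sup id)
    have h4 : (X ⊔ a) ⊔ (X ⊔ T.sup id) = X ⊔ (id a ⊔ T.sup id) := by
      rw [sup_sup_sup_comm, sup_idem]; rfl
    rw [h4, h1, h2] at h3
    have h5 : r X ≤ r ((X ⊔ a) ⊓ (X ⊔ T.sup id)) :=
      hr.2.1 _ _ (le_inf le_sup_left le_sup_left)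
    have h6 : r X ≤ r (X ⊔ (id a ⊔ T.sup id)) := hr.2.1 _ _ le_sup_left
    omega

lemma r_sup_sSup (hr : IsQMatroid r) (X : Submodule K V) {S : Set (Submodule K V)}
    (h : ∀ s ∈ S, r (X ⊔ s) = r X) : r (X ⊔ sSup S) = r X := by
  haveI : Finite (Submodule K V) := finite_submodule
  have hfin : S.Finite := Set.toFinite S
  have hS : sSup S = hfin.toFinset.sup id := by
    rw [Finset.sup_id_eq_sSup, hfin.coe_toFinset]
  rw [hS]
  exact r_sup_finset hr X _ (fun s hs => h s (hfin.mem_toFinset.mp hs))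

lemma le_qcl (hr : IsQMatroid r) (X : Submodule K V) : X ≤ qcl r X := by
  intro v hv
  rcases eq_or_ne v 0 with rfl | hv0
  · exact zero_mem _
  · have h1 : OneDim (K ∙ v) := finrank_span_singleton hv0
    have hle : (K ∙ v) ≤ X := (span_singleton_le_iff_mem v X).mpr hv
    have hx : r (X ⊔ K ∙ v) = r X := by rw [sup_eq_left.mpr hle]
    have hmem : (K ∙ v) ∈ {x : Submodule K V | OneDim x ∧ r (X ⊔ x) = r X} := ⟨h1, hx⟩
    have hline : (K ∙ v) ≤ qcl r X := le_sSup hmem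
    exact hline (mem_span_singleton_self v)

lemma r_qcl (hr : IsQMatroid r) (X : Submodule K V) : r (qcl r X) = r X := by
  have h : r (X ⊔ qcl r X) = r X :=
    r_sup_sSup hr X (fun s hs => hs.2)
  rwa [sup_eq_right.mpr (le_qcl hr X)] at h

lemma qcl_mono (hr : IsQMatroid r) {X Y : Submodule K V} (hXY : X ≤ Y) :
    qcl r X ≤ qcl r Y :=
  sSup_le_sSup (fun x hx => ⟨hx.1, absorb hr hXY hx.2⟩)

lemma line_le_qcl {X x : Submodule K V} (h1 : OneDim x) (h2 : r (X ⊔ x) = r X) :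
    x ≤ qcl r X := le_sSup ⟨h1, h2⟩

lemma le_qcl_of_le_of_r_eq (hr : IsQMatroid r) {X F : Submodule K V}
    (hXF : X ≤ F) (hrF : r F = r X) : F ≤ qcl r X := by
  intro v hv
  rcases eq_or_ne v 0 with rfl | h0
  · exact zero_mem _
  · have hle : X ⊔ (K ∙ v) ≤ F := sup_le hXF ((span_singleton_le_iff_mem v F).mpr hv)
    have hr2 : r (X ⊔ K ∙ v) = r X :=
      le_antisymm (hrF ▸ hr.2.1 _ _ hle) (hr.2.1 _ _ le_sup_left)
    have hline : (K ∙ v) ≤ qcl r X := line_le_qcl (finrank_span_singleton h0) hr2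
    exact hline (mem_span_singleton_self v)

lemma qcl_flat (hr : IsQMatroid r) (X : Submodule K V) : IsFlat r (qcl r X) := by
  intro x hx hnle
  by_contra hcon
  push_neg at hcon
  have heq : r (qcl r X ⊔ x) = r (qcl r X) := le_antisymm hcon (hr.2.1 _ _ le_sup_left)
  have h2 : r (X ⊔ x) = r X := by
    have h1 : r (X ⊔ x) ≤ r (qcl r X ⊔ x) :=
      hr.2.1 _ _ (sup_le (le_trans (le_qcl hr X) le_sup_left) le_sup_right)
    rw [heq, r_qcl hr] at h1
    exact le_antisymm h1 (hr.2.1 _ _ le_sup_left)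
  exact hnle (line_le_qcl hx h2)

end Rank

section Geom

variable [Field K] [AddCommGroup V] [Module K V] [FiniteDimensional K V]
variable {W : Submodule K V}

lemma sup_line_eq_top (hdim : Module.finrank K V = Module.finrank K ↥W + 1)
    {v : V} (hv : v ∉ W) : W ⊔ (K ∙ v) = ⊤ := by
  have hlt : W < W ⊔ K ∙ v :=
    lt_of_le_of_ne le_sup_left
      (fun h => hv (h ▸ (le_sup_right : (K ∙ v) ≤ W ⊔ K ∙ v) (mem_span_singleton_self v)))
  have h1 : Module.finrank K ↥W < Module.finrank K ↥(W ⊔ K ∙ v) :=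
    Submodule.finrank_lt_finrank_of_lt hlt
  have h2 : Module.finrank K ↥(W ⊔ K ∙ v) ≤ Module.finrank K V := Submodule.finrank_le _
  exact Submodule.eq_top_of_finrank_eq (le_antisymm h2 (by omega))

lemma decomp (hdim : Module.finrank K V = Module.finrank K ↥W + 1)
    {Z : Submodule K V} {v : V} (hvZ : v ∈ Z) (hvW : v ∉ W) :
    Z = (Z ⊓ W) ⊔ (K ∙ v) := by
  refine le_antisymm ?_ (sup_le inf_le_left ((span_singleton_le_iff_mem v Z).mpr hvZ))
  intro z hz
  have hzt : z ∈ W ⊔ K ∙ v := by rw [sup_line_eq_top hdim hvW]; trivial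
  rcases mem_sup.mp hzt with ⟨w, hw, x, hx, rfl⟩
  have hxZ : x ∈ Z := (span_singleton_le_iff_mem v Z).mpr hvZ hx
  have hwZ : w ∈ Z := by simpa using Z.sub_mem hz hxZ
  exact mem_sup.mpr ⟨w, ⟨hwZ, hw⟩, x, hx, rfl⟩

lemma sup_line_inf_W {X : Submodule K ↥W} {v : V} (hv : v ∉ W) :
    (map W.subtype X ⊔ K ∙ v) ⊓ W = map W.subtype X := by
  refine le_antisymm ?_ (le_inf le_sup_left (map_subtype_le W X))
  rintro z ⟨hz1, hz2⟩
  rcases mem_sup.mp hz1 with ⟨u, hu, x, hx, rfl⟩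
  rcases mem_span_singleton.mp hx with ⟨a, rfl⟩
  by_cases ha : a = 0
  · simpa [ha] using hu
  · exfalso; apply hv
    have huW : u ∈ W := map_subtype_le W X hu
    have hav : a • v ∈ W := by simpa using W.sub_mem hz2 huW
    have := W.smul_mem a⁻¹ hav
    simpa [ha, smul_smul] using this

lemma comap_sup_of_le {Z₁ Z₂ : Submodule K V} (h1 : Z₁ ≤ W) (h2 : Z₂ ≤ W) :
    comap W.subtype (Z₁ ⊔ Z₂) = comap W.subtype Z₁ ⊔ comap W.subtype Z₂ := by
  apply map_injective_of_injective W.injective_subtype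
  rw [Submodule.map_sup, map_comap_subtype, map_comap_subtype, map_comap_subtype,
    inf_eq_right.mpr h1, inf_eq_right.mpr h2, inf_eq_right.mpr (sup_le h1 h2)]

end Geom


section Main

variable [Field K] [Fintype K] [AddCommGroup V] [Module K V] [FiniteDimensional K V]

open Classical in
/-- The increment `δ`. -/
noncomputable def dlt {W : Submodule K V} (rM : Submodule K ↥W → ℕ)
    (μ : Delta W → Set (Submodule K ↥W)) (e : Delta W) (X : Submodule K ↥W) : ℕ :=
  if qcl rM X ∈ μ e then 0 else 1

variable {W : Submodule K V} {rM : Submodule K ↥W → ℕ} {μ : Delta W → Set (Submodule K ↥W)}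

lemma dlt_le_one (e : Delta W) (X : Submodule K ↥W) : dlt rM μ e X ≤ 1 := by
  unfold dlt; split <;> omega

lemma dlt_eq_zero_iff {e : Delta W} {X : Submodule K ↥W} :
    dlt rM μ e X = 0 ↔ qcl rM X ∈ μ e := by
  unfold dlt; split <;> simp_all

lemma dlt_mono (hM : IsQMatroid rM) (hμ : IsMCS W rM μ) {X Y : Submodule K ↥W}
    (hXY : X ≤ Y) (e : Delta W) : dlt rM μ e Y ≤ dlt rM μ e X := by
  by_cases h : qcl rM X ∈ μ e
  · have hY : qcl rM Y ∈ μ e :=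
      (hμ.1 e).2.1 _ h _ (qcl_flat hM Y) (qcl_mono hM hXY)
    rw [dlt_eq_zero_iff.mpr hY]
    omega
  · have : dlt rM μ e X = 1 := by unfold dlt; rw [if_neg h]
    rw [this]
    exact dlt_le_one e Y

lemma r'_eq {r' : Submodule K V → ℕ}
    (h₂ : ∀ X : Submodule K ↥W, ∀ e : Delta W,
      (qcl rM X ∈ μ e → r' (Submodule.map W.subtype X ⊔ (e : Submodule K V)) = rM X) ∧
      (qcl rM X ∉ μ e → r' (Submodule.map W.subtype X ⊔ (e : Submodule K V)) = rM X + 1))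
    (X : Submodule K ↥W) (e : Delta W) :
    r' (Submodule.map W.subtype X ⊔ (e : Submodule K V)) = rM X + dlt rM μ e X := by
  by_cases h : qcl rM X ∈ μ e
  · rw [(h₂ X e).1 h, dlt, if_pos h]; omega
  · rw [(h₂ X e).2 h, dlt, if_neg h]

/-- The key δ-inequality used in the cases where all four subspaces use the
same one-dimensional space `e`. -/
lemma key (hM : IsQMatroid rM) (hμ : IsMCS W rM μ) (e : Delta W)
    (X₁ X₂ : Submodule K ↥W) :
    rM (X₁ ⊔ X₂) + dlt rM μ e (X₁ ⊔ X₂) + (rM (X₁ ⊓ X₂) + dlt rM μ e (X₁ ⊓ X₂)) ≤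
      rM X₁ + dlt rM μ e X₁ + (rM X₂ + dlt rM μ e X₂) := by
  have hsub := hM.2.2 X₁ X₂
  have hm1 : dlt rM μ e (X₁ ⊔ X₂) ≤ dlt rM μ e X₁ := dlt_mono hM hμ le_sup_left e
  have hm2 : dlt rM μ e (X₁ ⊔ X₂) ≤ dlt rM μ e X₂ := dlt_mono hM hμ le_sup_right e
  have hb1 : dlt rM μ e X₁ ≤ 1 := dlt_le_one e X₁
  have hb2 : dlt rM μ e X₂ ≤ 1 := dlt_le_one e X₂
  have hb3 : dlt rM μ e (X₁ ⊓ X₂) ≤ 1 := dlt_le_one e (X₁ ⊓ X₂)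
  by_cases hcrit : dlt rM μ e X₁ = 0 ∧ dlt rM μ e X₂ = 0 ∧ dlt rM μ e (X₁ ⊓ X₂) = 1
  · obtain ⟨hd1, hd2, hd3⟩ := hcrit
    have hstrict : rM (X₁ ⊔ X₂) + rM (X₁ ⊓ X₂) + 1 ≤ rM X₁ + rM X₂ := by
      by_contra hcon
      push_neg at hcon
      have heq : rM (X₁ ⊔ X₂) + rM (X₁ ⊓ X₂) = rM X₁ + rM X₂ := by omega
      have hF1 : qcl rM X₁ ∈ μ e := dlt_eq_zero_iff.mp hd1
      have hF2 : qcl rM X₂ ∈ μ e := dlt_eq_zero_iff.mp hd2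
      have ha : rM (qcl rM X₁) = rM X₁ := r_qcl hM X₁
      have hb : rM (qcl rM X₂) = rM X₂ := r_qcl hM X₂
      have hcle : qcl rM X₁ ⊔ qcl rM X₂ ≤ qcl rM (X₁ ⊔ X₂) :=
        sup_le (qcl_mono hM le_sup_left) (qcl_mono hM le_sup_right)
      have hc : rM (qcl rM X₁ ⊔ qcl rM X₂) = rM (X₁ ⊔ X₂) := by
        refine le_antisymm ?_ (hM.2.1 _ _ (sup_le_sup (le_qcl hM X₁) (le_qcl hM X₂)))
        have := hM.2.1 _ _ hcle
        rwa [r_qcl hM (X₁ ⊔ X₂)] at this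
      have hsubF := hM.2.2 (qcl rM X₁) (qcl rM X₂)
      have hinfle : X₁ ⊓ X₂ ≤ qcl rM X₁ ⊓ qcl rM X₂ :=
        inf_le_inf (le_qcl hM X₁) (le_qcl hM X₂)
      have hdle : rM (X₁ ⊓ X₂) ≤ rM (qcl rM X₁ ⊓ qcl rM X₂) := hM.2.1 _ _ hinfle
      have hd : rM (qcl rM X₁ ⊓ qcl rM X₂) = rM (X₁ ⊓ X₂) := by omega
      have hmp : ModularPair rM (qcl rM X₁) (qcl rM X₂) := by
        unfold ModularPair; omega
      have hmem : qcl rM X₁ ⊓ qcl rM X₂ ∈ μ e := (hμ.1 e).2.2 _ hF1 _ hF2 hmp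
      have hle2 : qcl rM X₁ ⊓ qcl rM X₂ ≤ qcl rM (X₁ ⊓ X₂) :=
        le_qcl_of_le_of_r_eq hM hinfle hd
      have hfinal : qcl rM (X₁ ⊓ X₂) ∈ μ e :=
        (hμ.1 e).2.1 _ hmem _ (qcl_flat hM _) hle2
      have := dlt_eq_zero_iff.mpr hfinal
      omega
    omega
  · omega

lemma case_mixed {W : Submodule K V} (hdim : Module.finrank K V = Module.finrank K ↥W + 1)
    {rM : Submodule K ↥W → ℕ} (hM : IsQMatroid rM)
    {μ : Delta W → Set (Submodule K ↥W)} (hμ : IsMCS W rM μ)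
    {r' : Submodule K V → ℕ}
    (h₁ : ∀ X : Submodule K ↥W, r' (Submodule.map W.subtype X) = rM X)
    (h₂ : ∀ X : Submodule K ↥W, ∀ e : Delta W,
      (qcl rM X ∈ μ e → r' (Submodule.map W.subtype X ⊔ (e : Submodule K V)) = rM X) ∧
      (qcl rM X ∉ μ e → r' (Submodule.map W.subtype X ⊔ (e : Submodule K V)) = rM X + 1))
    {Z₁ Z₂ : Submodule K V} (hle1 : Z₁ ≤ W) (hle2 : ¬ Z₂ ≤ W) :
    r' (Z₁ ⊔ Z₂) + r' (Z₁ ⊓ Z₂) ≤ r' Z₁ + r' Z₂ := by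
  obtain ⟨v, hvZ, hvW⟩ := SetLike.not_le_iff_exists.mp hle2
  have hv0 : v ≠ 0 := fun h => hvW (h ▸ W.zero_mem)
  set e : Delta W := ⟨K ∙ v, finrank_span_singleton hv0,
    fun hle => hvW (hle (mem_span_singleton_self v))⟩ with he
  set X₁ := comap W.subtype Z₁ with hX₁
  set X₂ := comap W.subtype Z₂ with hX₂
  have hmX₁ : Submodule.map W.subtype X₁ = Z₁ := by
    rw [hX₁, map_comap_subtype]; exact inf_eq_right.mpr hle1
  have hmX₂ : Submodule.map W.subtype X₂ = W ⊓ Z₂ := map_comap_subtype W Z₂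
  have hZ₂eq : Z₂ = Submodule.map W.subtype X₂ ⊔ (K ∙ v) := by
    rw [hmX₂, inf_comm]; exact decomp hdim hvZ hvW
  have hr'Z₂ : r' Z₂ = rM X₂ + dlt rM μ e X₂ := by
    rw [hZ₂eq]; exact r'_eq h₂ X₂ e
  have hsup : Z₁ ⊔ Z₂ = Submodule.map W.subtype (X₁ ⊔ X₂) ⊔ (K ∙ v) := by
    rw [Submodule.map_sup, hmX₁, sup_assoc]
    conv_lhs => rw [hZ₂eq]
  have hr'sup : r' (Z₁ ⊔ Z₂) = rM (X₁ ⊔ X₂) + dlt rM μ e (X₁ ⊔ X₂) := by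
    rw [hsup]; exact r'_eq h₂ (X₁ ⊔ X₂) e
  have hinf : Z₁ ⊓ Z₂ = Submodule.map W.subtype (X₁ ⊓ X₂) := by
    rw [Submodule.map_inf W.subtype W.injective_subtype, hmX₁, hmX₂,
      inf_comm W Z₂, ← inf_assoc, inf_eq_left.mpr (le_trans inf_le_left hle1)]
  have hr'inf : r' (Z₁ ⊓ Z₂) = rM (X₁ ⊓ X₂) := by rw [hinf, h₁]
  have hr'Z₁ : r' Z₁ = rM X₁ := by rw [← hmX₁, h₁]
  rw [hr'sup, hr'inf, hr'Z₁, hr'Z₂]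
  have hsub := hM.2.2 X₁ X₂
  have hmono : dlt rM μ e (X₁ ⊔ X₂) ≤ dlt rM μ e X₂ := dlt_mono hM hμ le_sup_right e
  omega

lemma case_both_deep {W : Submodule K V} (hdim : Module.finrank K V = Module.finrank K ↥W + 1)
    {rM : Submodule K ↥W → ℕ} (hM : IsQMatroid rM)
    {μ : Delta W → Set (Submodule K ↥W)} (hμ : IsMCS W rM μ)
    {r' : Submodule K V → ℕ}
    (h₂ : ∀ X : Submodule K ↥W, ∀ e : Delta W,
      (qcl rM X ∈ μ e → r' (Submodule.map W.subtype X ⊔ (e : Submodule K V)) = rM X) ∧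
      (qcl rM X ∉ μ e → r' (Submodule.map W.subtype X ⊔ (e : Submodule K V)) = rM X + 1))
    {Z₁ Z₂ : Submodule K V} (hinfW : ¬ Z₁ ⊓ Z₂ ≤ W) :
    r' (Z₁ ⊔ Z₂) + r' (Z₁ ⊓ Z₂) ≤ r' Z₁ + r' Z₂ := by
  obtain ⟨v, hvZ, hvW⟩ := SetLike.not_le_iff_exists.mp hinfW
  have hv1 : v ∈ Z₁ := hvZ.1
  have hv2 : v ∈ Z₂ := hvZ.2
  have hv0 : v ≠ 0 := fun h => hvW (h ▸ W.zero_mem)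
  set e : Delta W := ⟨K ∙ v, finrank_span_singleton hv0,
    fun hle => hvW (hle (mem_span_singleton_self v))⟩ with he
  set X₁ := comap W.subtype Z₁ with hX₁
  set X₂ := comap W.subtype Z₂ with hX₂
  have hmX₁ : Submodule.map W.subtype X₁ = W ⊓ Z₁ := map_comap_subtype W Z₁
  have hmX₂ : Submodule.map W.subtype X₂ = W ⊓ Z₂ := map_comap_subtype W Z₂
  have hZ₁eq : Z₁ = Submodule.map W.subtype X₁ ⊔ (K ∙ v) := by
    rw [hmX₁, inf_comm]; exact decomp hdim hv1 hvW
  have hZ₂eq : Z₂ = Submodule.map W.subtype X₂ ⊔ (K ∙ v) := by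
    rw [hmX₂, inf_comm]; exact decomp hdim hv2 hvW
  have hr'Z₁ : r' Z₁ = rM X₁ + dlt rM μ e X₁ := by rw [hZ₁eq]; exact r'_eq h₂ X₁ e
  have hr'Z₂ : r' Z₂ = rM X₂ + dlt rM μ e X₂ := by rw [hZ₂eq]; exact r'_eq h₂ X₂ e
  have hsup : Z₁ ⊔ Z₂ = Submodule.map W.subtype (X₁ ⊔ X₂) ⊔ (K ∙ v) := by
    conv_lhs => rw [hZ₁eq, hZ₂eq]
    rw [Submodule.map_sup, sup_sup_sup_comm, sup_idem]
  have hinf : Z₁ ⊓ Z₂ = Submodule.map W.subtype (X₁ ⊓ X₂) ⊔ (K ∙ v) := by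
    have hd := decomp hdim (show v ∈ Z₁ ⊓ Z₂ from hvZ) hvW
    rw [hd]
    congr 1
    rw [Submodule.map_inf W.subtype W.injective_subtype, hmX₁, hmX₂,
      inf_comm (Z₁ ⊓ Z₂) W, inf_inf_distrib_left]
  have hr'sup : r' (Z₁ ⊔ Z₂) = rM (X₁ ⊔ X₂) + dlt rM μ e (X₁ ⊔ X₂) := by
    rw [hsup]; exact r'_eq h₂ (X₁ ⊔ X₂) e
  have hr'inf : r' (Z₁ ⊓ Z₂) = rM (X₁ ⊓ X₂) + dlt rM μ e (X₁ ⊓ X₂) := by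
    rw [hinf]; exact r'_eq h₂ (X₁ ⊓ X₂) e
  rw [hr'sup, hr'inf, hr'Z₁, hr'Z₂]
  exact key hM hμ e X₁ X₂

lemma case_both_shallow {W : Submodule K V}
    (hdim : Module.finrank K V = Module.finrank K ↥W + 1)
    {rM : Submodule K ↥W → ℕ} (hM : IsQMatroid rM)
    {μ : Delta W → Set (Submodule K ↥W)} (hμ : IsMCS W rM μ)
    {r' : Submodule K V → ℕ}
    (h₁ : ∀ X : Submodule K ↥W, r' (Submodule.map W.subtype X) = rM X)
    (h₂ : ∀ X : Submodule K ↥W, ∀ e : Delta W,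
      (qcl rM X ∈ μ e → r' (Submodule.map W.subtype X ⊔ (e : Submodule K V)) = rM X) ∧
      (qcl rM X ∉ μ e → r' (Submodule.map W.subtype X ⊔ (e : Submodule K V)) = rM X + 1))
    {Z₁ Z₂ : Submodule K V} (hle1 : ¬ Z₁ ≤ W) (hle2 : ¬ Z₂ ≤ W) (hinfW : Z₁ ⊓ Z₂ ≤ W) :
    r' (Z₁ ⊔ Z₂) + r' (Z₁ ⊓ Z₂) ≤ r' Z₁ + r' Z₂ := by
  obtain ⟨v₁, hv1Z, hv1W⟩ := SetLike.not_le_iff_exists.mp hle1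
  obtain ⟨v₂, hv2Z, hv2W⟩ := SetLike.not_le_iff_exists.mp hle2
  have hv10 : v₁ ≠ 0 := fun h => hv1W (h ▸ W.zero_mem)
  have hv20 : v₂ ≠ 0 := fun h => hv2W (h ▸ W.zero_mem)
  set e₁ : Delta W := ⟨K ∙ v₁, finrank_span_singleton hv10,
    fun hle => hv1W (hle (mem_span_singleton_self v₁))⟩ with he₁def
  set e₂ : Delta W := ⟨K ∙ v₂, finrank_span_singleton hv20,
    fun hle => hv2W (hle (mem_span_singleton_self v₂))⟩ with he₂def
  have hce₁ : (e₁ : Submodule K V) = K ∙ v₁ := rfl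
  have hce₂ : (e₂ : Submodule K V) = K ∙ v₂ := rfl
  set X₁ := comap W.subtype Z₁ with hX₁
  set X₂ := comap W.subtype Z₂ with hX₂
  have hmX₁ : Submodule.map W.subtype X₁ = W ⊓ Z₁ := map_comap_subtype W Z₁
  have hmX₂ : Submodule.map W.subtype X₂ = W ⊓ Z₂ := map_comap_subtype W Z₂
  have hZ₁eq : Z₁ = Submodule.map W.subtype X₁ ⊔ (K ∙ v₁) := by
    rw [hmX₁, inf_comm]; exact decomp hdim hv1Z hv1W
  have hZ₂eq : Z₂ = Submodule.map W.subtype X₂ ⊔ (K ∙ v₂) := by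
    rw [hmX₂, inf_comm]; exact decomp hdim hv2Z hv2W
  have hr'Z₁ : r' Z₁ = rM X₁ + dlt rM μ e₁ X₁ := by rw [hZ₁eq]; exact r'_eq h₂ X₁ e₁
  have hr'Z₂ : r' Z₂ = rM X₂ + dlt rM μ e₂ X₂ := by rw [hZ₂eq]; exact r'_eq h₂ X₂ e₂
  have hinfeq : Z₁ ⊓ Z₂ = Submodule.map W.subtype (X₁ ⊓ X₂) := by
    rw [Submodule.map_inf W.subtype W.injective_subtype, hmX₁, hmX₂,
      ← inf_inf_distrib_left]
    exact (inf_eq_right.mpr hinfW).symm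
  have hr'inf : r' (Z₁ ⊓ Z₂) = rM (X₁ ⊓ X₂) := by rw [hinfeq, h₁]
  -- decompose v₂ over W ⊔ K∙v₁
  have hv2top : v₂ ∈ W ⊔ (K ∙ v₁) := by rw [sup_line_eq_top hdim hv1W]; trivial
  obtain ⟨w, hwW, x, hx, hvx⟩ := mem_sup.mp hv2top
  obtain ⟨a, rfl⟩ := mem_span_singleton.mp hx
  -- hvx : w + a • v₁ = v₂
  have ha0 : a ≠ 0 := by
    rintro rfl
    apply hv2W
    rw [← hvx]
    simpa using hwW
  have hw0 : w ≠ 0 := by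
    rintro rfl
    apply hv2W
    apply hinfW
    refine ⟨?_, hv2Z⟩
    rw [← hvx]
    simpa using Z₁.smul_mem a hv1Z
  set wW : ↥W := ⟨w, hwW⟩ with hwWdef
  have hwW0 : wW ≠ 0 := fun h => hw0 (congrArg Subtype.val h)
  set fW : Submodule K ↥W := K ∙ wW with hfWdef
  have hmfW : Submodule.map W.subtype fW = K ∙ w := by
    rw [hfWdef, Submodule.map_span, Set.image_singleton]
    rfl
  have hfW1 : OneDim fW := finrank_span_singleton hwW0
  set Y : Submodule K ↥W := X₁ ⊔ X₂ ⊔ fW with hYdef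
  have hYeq : Submodule.map W.subtype Y
      = Submodule.map W.subtype X₁ ⊔ Submodule.map W.subtype X₂ ⊔ (K ∙ w) := by
    rw [hYdef, Submodule.map_sup, Submodule.map_sup, hmfW]
  have hwmem : w ∈ Z₁ ⊔ Z₂ := by
    have h1 : v₂ ∈ Z₁ ⊔ Z₂ := (le_sup_right : Z₂ ≤ Z₁ ⊔ Z₂) hv2Z
    have h2 : a • v₁ ∈ Z₁ ⊔ Z₂ := (le_sup_left : Z₁ ≤ Z₁ ⊔ Z₂) (Z₁.smul_mem a hv1Z)
    have h3 := sub_mem h1 h2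
    rwa [← hvx, add_sub_cancel_right] at h3
  have hMle1 : Submodule.map W.subtype X₁ ≤ Z₁ ⊔ Z₂ :=
    le_trans (hmX₁ ▸ inf_le_right) le_sup_left
  have hMle2 : Submodule.map W.subtype X₂ ≤ Z₁ ⊔ Z₂ :=
    le_trans (hmX₂ ▸ inf_le_right) le_sup_right
  have hYleS : Submodule.map W.subtype Y ≤ Z₁ ⊔ Z₂ := by
    rw [hYeq]
    exact sup_le (sup_le hMle1 hMle2) ((span_singleton_le_iff_mem w _).mpr hwmem)
  have hsup1 : Z₁ ⊔ Z₂ = Submodule.map W.subtype Y ⊔ (K ∙ v₁) := by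
    apply le_antisymm
    · refine sup_le ?_ ?_
      · rw [hZ₁eq]
        refine sup_le ?_ le_sup_right
        refine le_trans ?_ le_sup_left
        rw [hYeq]
        exact le_trans le_sup_left le_sup_left
      · rw [hZ₂eq]
        refine sup_le ?_ ?_
        · refine le_trans ?_ le_sup_left
          rw [hYeq]
          exact le_trans le_sup_right le_sup_left
        · rw [span_singleton_le_iff_mem, ← hvx]
          refine add_mem ?_ ?_
          · apply (le_sup_left : _ ≤ _ ⊔ (K ∙ v₁))
            rw [hYeq]
            exact (le_sup_right : (K ∙ w) ≤ _) (mem_span_singleton_self w)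
          · exact (le_sup_right : (K ∙ v₁) ≤ _)
              (Submodule.smul_mem _ a (mem_span_singleton_self v₁))
    · exact sup_le hYleS (le_trans ((span_singleton_le_iff_mem v₁ Z₁).mpr hv1Z) le_sup_left)
  have hsup2 : Z₁ ⊔ Z₂ = Submodule.map W.subtype Y ⊔ (K ∙ v₂) := by
    apply le_antisymm
    · refine sup_le ?_ ?_
      · rw [hZ₁eq]
        refine sup_le ?_ ?_
        · refine le_trans ?_ le_sup_left
          rw [hYeq]
          exact le_trans le_sup_left le_sup_left
        · rw [span_singleton_le_iff_mem]
          have hveq : a⁻¹ • (v₂ - w) = v₁ := by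
            rw [← hvx]
            rw [add_sub_cancel_left]
            rw [smul_smul, inv_mul_cancel₀ ha0, one_smul]
          rw [← hveq]
          refine Submodule.smul_mem _ _ (sub_mem ?_ ?_)
          · exact (le_sup_right : (K ∙ v₂) ≤ _) (mem_span_singleton_self v₂)
          · apply (le_sup_left : _ ≤ _ ⊔ (K ∙ v₂))
            rw [hYeq]
            exact (le_sup_right : (K ∙ w) ≤ _) (mem_span_singleton_self w)
      · rw [hZ₂eq]
        refine sup_le ?_ le_sup_right
        refine le_trans ?_ le_sup_left
        rw [hYeq]
        exact le_trans le_sup_right le_sup_left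
    · exact sup_le hYleS (le_trans ((span_singleton_le_iff_mem v₂ Z₂).mpr hv2Z) le_sup_right)
  have he1 : r' (Z₁ ⊔ Z₂) = rM Y + dlt rM μ e₁ Y := by
    rw [hsup1]; exact r'_eq h₂ Y e₁
  have he2 : r' (Z₁ ⊔ Z₂) = rM Y + dlt rM μ e₂ Y := by
    rw [hsup2]; exact r'_eq h₂ Y e₂
  have hdd : dlt rM μ e₁ Y = dlt rM μ e₂ Y := by omega
  have hd1 : dlt rM μ e₁ Y ≤ dlt rM μ e₁ X₁ :=
    dlt_mono hM hμ (le_trans le_sup_left le_sup_left) e₁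
  have hd2 : dlt rM μ e₂ Y ≤ dlt rM μ e₂ X₂ :=
    dlt_mono hM hμ (le_trans le_sup_right le_sup_left) e₂
  have hjump : rM Y ≤ rM (X₁ ⊔ X₂) + 1 := by
    have hj1 := hM.2.2 (X₁ ⊔ X₂) fW
    have hj2 : rM fW ≤ 1 := le_trans (hM.1 fW) (le_of_eq hfW1)
    rw [← hYdef] at hj1
    omega
  have hsub := hM.2.2 X₁ X₂
  rw [he1, hr'inf, hr'Z₁, hr'Z₂]
  by_cases hzero : dlt rM μ e₁ X₁ = 0 ∧ dlt rM μ e₂ X₂ = 0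
  · obtain ⟨hz1, hz2⟩ := hzero
    have hq1 : qcl rM X₁ ∈ μ e₁ := dlt_eq_zero_iff.mp hz1
    have hq2 : qcl rM X₂ ∈ μ e₂ := dlt_eq_zero_iff.mp hz2
    have hH1 : qcl rM (X₁ ⊔ X₂) ∈ μ e₁ :=
      (hμ.1 e₁).2.1 _ hq1 _ (qcl_flat hM _) (qcl_mono hM le_sup_left)
    have hH2 : qcl rM (X₁ ⊔ X₂) ∈ μ e₂ :=
      (hμ.1 e₂).2.1 _ hq2 _ (qcl_flat hM _) (qcl_mono hM le_sup_right)
    have hQM : Submodule.map W.subtype (qcl rM (X₁ ⊔ X₂)) ⊔ (e₁ : Submodule K V)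
        = Submodule.map W.subtype (qcl rM (X₁ ⊔ X₂)) ⊔ (e₂ : Submodule K V) :=
      (hμ.2 e₁ e₂ _ hH1).mpr hH2
    have hwmem2 : w ∈ Submodule.map W.subtype (qcl rM (X₁ ⊔ X₂)) := by
      have hv2' : v₂ ∈ Submodule.map W.subtype (qcl rM (X₁ ⊔ X₂)) ⊔ (e₂ : Submodule K V) :=
        (le_sup_right : (e₂ : Submodule K V) ≤ _)
          (by rw [hce₂]; exact mem_span_singleton_self v₂)
      rw [← hQM] at hv2'
      have hav : a • v₁ ∈ Submodule.map W.subtype (qcl rM (X₁ ⊔ X₂)) ⊔ (e₁ : Submodule K V) :=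
        (le_sup_right : (e₁ : Submodule K V) ≤ _)
          (by rw [hce₁]; exact Submodule.smul_mem _ a (mem_span_singleton_self v₁))
      have hsub' := sub_mem hv2' hav
      rw [← hvx, add_sub_cancel_right] at hsub'
      have hmem : w ∈ (Submodule.map W.subtype (qcl rM (X₁ ⊔ X₂)) ⊔ (K ∙ v₁)) ⊓ W :=
        ⟨by rw [← hce₁]; exact hsub', hwW⟩
      rwa [sup_line_inf_W hv1W] at hmem
    have hfWle : fW ≤ qcl rM (X₁ ⊔ X₂) := by
      rw [hfWdef, span_singleton_le_iff_mem]
      obtain ⟨y, hy, hyw⟩ := Submodule.mem_map.mp hwmem2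
      have hywW : y = wW := Subtype.ext hyw
      rwa [← hywW]
    have hYle : Y ≤ qcl rM (X₁ ⊔ X₂) := by
      rw [hYdef]
      exact sup_le (le_qcl hM _) hfWle
    have hrY : rM Y = rM (X₁ ⊔ X₂) := by
      refine le_antisymm ?_ (hM.2.1 _ _ (by rw [hYdef]; exact le_sup_left))
      have := hM.2.1 _ _ hYle
      rwa [r_qcl hM] at this
    omega
  · have hb1 : dlt rM μ e₁ X₁ ≤ 1 := dlt_le_one _ _
    have hb2 : dlt rM μ e₂ X₂ ≤ 1 := dlt_le_one _ _
    omega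

lemma r'_of_le {W : Submodule K V} {rM : Submodule K ↥W → ℕ} {r' : Submodule K V → ℕ}
    (h₁ : ∀ X : Submodule K ↥W, r' (Submodule.map W.subtype X) = rM X)
    {Z : Submodule K V} (hZ : Z ≤ W) : r' Z = rM (comap W.subtype Z) := by
  have hmap : Submodule.map W.subtype (comap W.subtype Z) = Z := by
    rw [map_comap_subtype]; exact inf_eq_right.mpr hZ
  conv_lhs => rw [← hmap]
  rw [h₁]

end Main


end QAux

/-- the function `r'` defined from a modular cut selector
satisfies the submodularity axiom (R3). -/
theorem stmt5 [Field K] [Fintype K] [AddCommGroup V] [Module K V] [FiniteDimensional K V]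
    (W : Submodule K V) (hdim : Module.finrank K V = Module.finrank K ↥W + 1)
    (rM : Submodule K ↥W → ℕ) (hM : IsQMatroid rM)
    (μ : Delta W → Set (Submodule K ↥W)) (hμ : IsMCS W rM μ)
    (r' : Submodule K V → ℕ)
    (h₁ : ∀ X : Submodule K ↥W, r' (Submodule.map W.subtype X) = rM X)
    (h₂ : ∀ X : Submodule K ↥W, ∀ e : Delta W,
      (qcl rM X ∈ μ e → r' (Submodule.map W.subtype X ⊔ (e : Submodule K V)) = rM X) ∧
      (qcl rM X ∉ μ e → r' (Submodule.map W.subtype X ⊔ (e : Submodule K V)) = rM X + 1)) :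
    ∀ Z₁ Z₂ : Submodule K V, r' (Z₁ ⊔ Z₂) + r' (Z₁ ⊓ Z₂) ≤ r' Z₁ + r' Z₂ := by
  intro Z₁ Z₂
  by_cases h1 : Z₁ ≤ W <;> by_cases h2 : Z₂ ≤ W
  · have hsle : Z₁ ⊔ Z₂ ≤ W := sup_le h1 h2
    have hile : Z₁ ⊓ Z₂ ≤ W := le_trans inf_le_left h1
    rw [QAux.r'_of_le h₁ h1, QAux.r'_of_le h₁ h2, QAux.r'_of_le h₁ hsle,
      QAux.r'_of_le h₁ hile, QAux.comap_sup_of_le h1 h2, Submodule.comap_inf]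
    exact hM.2.2 _ _
  · exact QAux.case_mixed hdim hM hμ h₁ h₂ h1 h2
  · have h := QAux.case_mixed hdim hM hμ h₁ h₂ h2 h1
    rw [sup_comm Z₂ Z₁, inf_comm Z₂ Z₁] at h
    omega
  · by_cases h3 : Z₁ ⊓ Z₂ ≤ W
    · exact QAux.case_both_shallow hdim hM hμ h₁ h₂ h1 h2 h3
    · exact QAux.case_both_deep hdim hM hμ h₂ h3
end

section
/- Let N=(E_N,r_N) be a q-matroid, E_M a subspace of E_N, and M=(E_M,r_M) the restriction of N to E_M. Then the collection of flats of M equals {F ∩ E_M : F a flat of N}. -/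
open Module Submodule

variable {K V V₁ V₂ : Type*}

section Aux
variable [Field K] [AddCommGroup V] [Module K V]

lemma le_of_onedim_le {A B : Submodule K V}
    (h : ∀ x : Submodule K V, OneDim x → x ≤ A → x ≤ B) : A ≤ B := by
  intro a ha
  by_cases h0 : a = 0
  · simp [h0]
  · exact h (K ∙ a) (finrank_span_singleton h0)
      ((Submodule.span_singleton_le_iff_mem a A).2 ha)
      (Submodule.mem_span_singleton_self a)

/-- Rank-preserving extension lemma: if adding `x` to `X` keeps the rank, the
same holds for any larger subspace `Y`. -/
lemma ext_rank {r : Submodule K V → ℕ} (hN : IsQMatroid r) {X Y x : Submodule K V}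
    (hXY : X ≤ Y) (hx : r (X ⊔ x) = r X) : r (Y ⊔ x) = r Y := by
  obtain ⟨R1, R2, R3⟩ := hN
  have h3 := R3 (X ⊔ x) Y
  have hsup : (X ⊔ x) ⊔ Y = Y ⊔ x := by
    rw [sup_comm X x, sup_assoc, sup_eq_right.2 hXY, sup_comm]
  have hle : X ≤ (X ⊔ x) ⊓ Y := le_inf le_sup_left hXY
  have h4 := R2 X ((X ⊔ x) ⊓ Y) hle
  rw [hsup, hx] at h3
  have h5 := R2 Y (Y ⊔ x) le_sup_left
  omega

lemma self_le_qcl {r : Submodule K V → ℕ} (X : Submodule K V) : X ≤ qcl r X := by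
  apply le_of_onedim_le
  intro x hx hxX
  exact le_sSup ⟨hx, by rw [sup_eq_left.2 hxX]⟩

lemma qcl_rank_aux [FiniteDimensional K V] {r : Submodule K V → ℕ} (hN : IsQMatroid r)
    (X : Submodule K V) :
    ∀ n (Z : Submodule K V), finrank K (qcl r X) ≤ finrank K Z + n → X ≤ Z →
      Z ≤ qcl r X → r Z = r X → r (qcl r X) = r X := by
  intro n
  induction n with
  | zero =>
    intro Z hfin _ hZ hr
    have : Z = qcl r X := Submodule.eq_of_le_of_finrank_le hZ (by omega)
    rw [← this, hr]
  | succ n ih =>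
    intro Z hfin hXZ hZ hr
    by_cases heq : Z = qcl r X
    · rw [← heq, hr]
    · have hx : ∃ x ∈ {x : Submodule K V | OneDim x ∧ r (X ⊔ x) = r X}, ¬ x ≤ Z := by
        by_contra hc
        push_neg at hc
        exact heq (le_antisymm hZ (sSup_le hc))
      obtain ⟨x, ⟨hx1, hx2⟩, hxZ⟩ := hx
      have hZ' : Z < Z ⊔ x := lt_of_le_of_ne le_sup_left
        (fun h => hxZ (h ▸ le_sup_right))
      have hfin' : finrank K ↥Z < finrank K ↥(Z ⊔ x) :=
        Submodule.finrank_lt_finrank_of_lt hZ'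
      exact ih (Z ⊔ x) (by omega) (le_trans hXZ le_sup_left)
        (sup_le hZ (le_sSup ⟨hx1, hx2⟩)) (by rw [ext_rank hN hXZ hx2, hr])

lemma qcl_rank [FiniteDimensional K V] {r : Submodule K V → ℕ} (hN : IsQMatroid r)
    (X : Submodule K V) : r (qcl r X) = r X :=
  qcl_rank_aux hN X (finrank K (qcl r X)) X (by omega) le_rfl (self_le_qcl X) rfl

lemma rank_sup_of_le_qcl [FiniteDimensional K V] {r : Submodule K V → ℕ}
    (hN : IsQMatroid r) {X x : Submodule K V} (hx : x ≤ qcl r X) : r (X ⊔ x) = r X := by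
  have h1 : r (X ⊔ x) ≤ r (qcl r X) :=
    hN.2.1 _ _ (sup_le (self_le_qcl X) hx)
  have h2 : r X ≤ r (X ⊔ x) := hN.2.1 _ _ le_sup_left
  rw [qcl_rank hN] at h1
  omega

lemma qcl_isFlat [FiniteDimensional K V] {r : Submodule K V → ℕ} (hN : IsQMatroid r)
    (X : Submodule K V) : IsFlat r (qcl r X) := by
  intro x hx hnle
  have h2 : r (qcl r X) ≤ r (qcl r X ⊔ x) := hN.2.1 _ _ le_sup_left
  rcases lt_or_eq_of_le h2 with h | h
  · exact h
  · exfalso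
    apply hnle
    have h3 : r (X ⊔ x) = r X := by
      have h4 : r (X ⊔ x) ≤ r (qcl r X ⊔ x) :=
        hN.2.1 _ _ (sup_le (le_trans (self_le_qcl X) le_sup_left) le_sup_right)
      have h5 : r X ≤ r (X ⊔ x) := hN.2.1 _ _ le_sup_left
      have h6 := qcl_rank hN X
      omega
    exact le_sSup ⟨hx, h3⟩

end Aux

/-- if `rM` is the restriction of the q-matroid `rN` to the
subspace `W`, then the flats of `rM` are exactly `{F ∩ W : F a flat of rN}`. -/
theorem stmt7 [Field K] [Fintype K] [AddCommGroup V] [Module K V] [FiniteDimensional K V]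
    (rN : Submodule K V → ℕ) (hN : IsQMatroid rN)
    (W : Submodule K V)
    (rM : Submodule K ↥W → ℕ)
    (hrM : ∀ X : Submodule K ↥W, rM X = rN (Submodule.map W.subtype X)) :
    Submodule.map W.subtype '' {F : Submodule K ↥W | IsFlat rM F} =
      (fun G : Submodule K V => G ⊓ W) '' {G : Submodule K V | IsFlat rN G} := by
  ext G'
  simp only [Set.mem_image, Set.mem_setOf_eq]
  have hmapdim : ∀ F : Submodule K ↥W, finrank K (Submodule.map W.subtype F) = finrank K F :=
    fun F => Submodule.finrank_map_subtype_eq W F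
  constructor
  · rintro ⟨F, hF, rfl⟩
    set F' := Submodule.map W.subtype F with hF'
    refine ⟨qcl rN F', qcl_isFlat hN F', ?_⟩
    have h1 : F' ≤ qcl rN F' ⊓ W := le_inf (self_le_qcl F') (Submodule.map_subtype_le W F)
    have h2 : qcl rN F' ⊓ W ≤ F' := by
      apply le_of_onedim_le
      intro x hx hxle
      by_contra hxF'
      set x' := Submodule.comap W.subtype x with hx'
      have hxW : x ≤ W := le_trans hxle inf_le_right
      have hmap : Submodule.map W.subtype x' = x := by
        rw [hx', Submodule.map_comap_subtype, inf_eq_right.2 hxW]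
      have hx'1 : OneDim x' := by
        have := hmapdim x'
        rw [hmap] at this
        rw [OneDim, ← this]; exact hx
      have hx'F : ¬ x' ≤ F := by
        intro h
        exact hxF' (hmap ▸ Submodule.map_mono h)
      have := hF x' hx'1 hx'F
      rw [hrM, hrM, Submodule.map_sup, hmap, ← hF'] at this
      have heq : rN (F' ⊔ x) = rN F' :=
        rank_sup_of_le_qcl hN (le_trans hxle inf_le_left)
      omega
    exact le_antisymm h2 h1
  · rintro ⟨G, hG, rfl⟩
    refine ⟨Submodule.comap W.subtype G, ?_, by rw [Submodule.map_comap_subtype, inf_comm]⟩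
    intro x' hx' hx'F
    set x := Submodule.map W.subtype x' with hx
    have hxW : x ≤ W := Submodule.map_subtype_le W x'
    have hx1 : OneDim x := by rw [OneDim, hmapdim x']; exact hx'
    have hxG : ¬ x ≤ G := by
      intro h
      exact hx'F (le_trans (Submodule.le_comap_map W.subtype x')
        (Submodule.comap_mono h))
    rw [hrM, hrM, Submodule.map_sup, Submodule.map_comap_subtype, inf_comm W G, ← hx]
    have h2 : rN (G ⊓ W) ≤ rN (G ⊓ W ⊔ x) := hN.2.1 _ _ le_sup_left
    rcases lt_or_eq_of_le h2 with h | h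
    · exact h
    · exfalso
      have h3 : rN (G ⊔ x) = rN G := ext_rank hN inf_le_left h.symm
      have := hG x hx1 hxG
      omega
end

section
/- Let M=(E_M,r_M) be a q-matroid, N=(E_N,r_N) a one-dimensional extension of M, and μ the modular cut selector determined by N (i.e., μ(e) = {F ∈ F_M : F + e is a flat of N and r_N(F+e)=r_N(F)} for each one-dimensional subspace e of E_N not contained in E_M). Then r_N(E_N) = r_M(E_M) + 1 if and only if μ(e) = ∅ for every one-dimensional subspace e of E_N not contained in E_M. -/
open Module Submodule

variable {K V V₁ V₂ : Type*}

private lemma aux_inf [Field K] [AddCommGroup V] [Module K V] [FiniteDimensional K V]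
    (W F' e : Submodule K V) (hF'W : F' ≤ W) (he1 : Module.finrank K ↥e = 1)
    (he2 : ¬ e ≤ W) : (F' ⊔ e) ⊓ W = F' := by
  refine (Submodule.eq_of_le_of_finrank_le (le_inf le_sup_left hF'W) ?_).symm
  have hlt : (F' ⊔ e) ⊓ W < F' ⊔ e := by
    refine lt_of_le_of_ne inf_le_left ?_
    intro h
    exact he2 (le_trans (le_trans le_sup_right h.ge) inf_le_right)
  have h1 := Submodule.finrank_lt_finrank_of_lt hlt
  have h2 := Submodule.finrank_sup_add_finrank_inf_eq F' e
  omega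

/-- for a one-dimensional extension `rN` of `rM` with determined
modular cut selector `μ`, `r_N(E_N) = r_M(E_M) + 1` iff `μ e = ∅` for every
`e ∈ Δ_q(E_N, E_M)`. -/
theorem stmt11 [Field K] [Fintype K] [AddCommGroup V] [Module K V] [FiniteDimensional K V]
    (W : Submodule K V) (hdim : Module.finrank K V = Module.finrank K ↥W + 1)
    (rM : Submodule K ↥W → ℕ) (hM : IsQMatroid rM)
    (rN : Submodule K V → ℕ) (hN : IsQMatroid rN)
    (hrest : ∀ X : Submodule K ↥W, rN (Submodule.map W.subtype X) = rM X)
    (μ : Delta W → Set (Submodule K ↥W))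
    (hμ : ∀ e : Delta W, μ e = {F : Submodule K ↥W | IsFlat rM F ∧
      IsFlat rN (Submodule.map W.subtype F ⊔ (e : Submodule K V)) ∧
      rN (Submodule.map W.subtype F ⊔ (e : Submodule K V)) =
        rN (Submodule.map W.subtype F)}) :
    rN ⊤ = rM ⊤ + 1 ↔ ∀ e : Delta W, μ e = ∅ := by
  obtain ⟨hN1, hN2, hN3⟩ := hN
  have hmapTop : Submodule.map W.subtype ⊤ = W := Submodule.map_subtype_top W
  have hrW : rN W = rM ⊤ := by
    have h := hrest ⊤
    rwa [hmapTop] at h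
  -- W ⊔ e = ⊤ for any e in Delta W
  have hsupTop : ∀ e : Submodule K V, ¬ e ≤ W → W ⊔ e = ⊤ := by
    intro e he
    have hlt : W < W ⊔ e := by
      refine lt_of_le_of_ne le_sup_left ?_
      intro h
      apply he
      rw [h]
      exact le_sup_right
    have h1 : Module.finrank K ↥W < Module.finrank K ↥(W ⊔ e) :=
      Submodule.finrank_lt_finrank_of_lt hlt
    have h2 : Module.finrank K ↥(W ⊔ e) ≤ Module.finrank K V :=
      Submodule.finrank_le _
    exact Submodule.eq_top_of_finrank_eq (by omega)
  constructor
  · -- forward direction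
    intro htop e
    rw [hμ e]
    ext F
    simp only [Set.mem_setOf_eq, Set.mem_empty_iff_false, iff_false, not_and]
    intro _ _ hr
    exfalso
    obtain ⟨he1, he2⟩ := e.2
    have hF'W : Submodule.map W.subtype F ≤ W := Submodule.map_subtype_le W F
    have hXW : (Submodule.map W.subtype F ⊔ (e : Submodule K V)) ⊔ W = ⊤ := by
      rw [sup_comm _ W, ← sup_assoc, sup_eq_left.mpr hF'W, hsupTop _ he2]
    have hXinf : (Submodule.map W.subtype F ⊔ (e : Submodule K V)) ⊓ W
        = Submodule.map W.subtype F := aux_inf W _ _ hF'W he1 he2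
    have hsub := hN3 (Submodule.map W.subtype F ⊔ (e : Submodule K V)) W
    rw [hXW, hXinf, hr] at hsub
    omega
  · -- reverse direction
    intro hall
    -- obtain a one-dimensional subspace not contained in W
    have hWne : W ≠ ⊤ := by
      intro h
      rw [h, finrank_top] at hdim
      omega
    obtain ⟨v, hv⟩ : ∃ v : V, v ∉ W := by
      by_contra h
      push_neg at h
      exact hWne (Submodule.eq_top_iff'.mpr h)
    have hv0 : v ≠ 0 := fun h => hv (h ▸ W.zero_mem)
    have heD : Submodule.span K {v} ∈ Delta W := by
      constructor
      · exact finrank_span_singleton hv0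
      · rw [Submodule.span_singleton_le_iff_mem]; exact hv
    set e : Delta W := ⟨Submodule.span K {v}, heD⟩ with he
    have hsup : W ⊔ (e : Submodule K V) = ⊤ := hsupTop _ heD.2
    -- rN ⊤ ≤ rM ⊤ + 1
    have hle : rN ⊤ ≤ rM ⊤ + 1 := by
      have hsub := hN3 W (e : Submodule K V)
      rw [hsup] at hsub
      have hre : rN (e : Submodule K V) ≤ 1 := by
        have h := hN1 (e : Submodule K V)
        rw [heD.1] at h
        exact h
      omega
    -- rM ⊤ ≤ rN ⊤
    have hge : rM ⊤ ≤ rN ⊤ := by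
      rw [← hrW]; exact hN2 W ⊤ le_top
    -- rule out rN ⊤ = rM ⊤
    rcases Nat.lt_or_ge (rN ⊤) (rM ⊤ + 1) with hcase | hcase
    · exfalso
      have heq : rN ⊤ = rN W := by rw [hrW]; omega
      have hmem : (⊤ : Submodule K ↥W) ∈ μ e := by
        rw [hμ e]
        refine ⟨fun x _ hx => absurd le_top hx, ?_, ?_⟩
        · rw [hmapTop, hsup]
          exact fun x _ hx => absurd le_top hx
        · rw [hmapTop, hsup, heq]
      rw [hall e] at hmem
      exact hmem
    · omega
end

section
/- Let M=(E_M,r_M) be a q-matroid and N=(E_N,r_N) the trivial one-dimensional extension of M (i.e., a one-dimensional extension with r_N(E_N) = r_M(E_M) + 1). Then the set of bases of M equals {B ∩ E_M : B a basis of N}. -/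
open Module Submodule

variable {K V V₁ V₂ : Type*}

section Aux

variable [Field K] [AddCommGroup V] [Module K V]

private lemma aux_span_inf_bot {W X : Submodule K V} {v : V} (hv : v ∉ W) (hX : X ≤ W) :
    X ⊓ Submodule.span K {v} = ⊥ := by
  rw [eq_bot_iff]
  rintro x ⟨hx1, hx2⟩
  obtain ⟨c, rfl⟩ := Submodule.mem_span_singleton.mp hx2
  rcases eq_or_ne c 0 with rfl | hc
  · simp
  · exact absurd (by simpa [smul_smul, inv_mul_cancel₀ hc] using W.smul_mem c⁻¹ (hX hx1)) hv

private lemma aux_sup_span_top [FiniteDimensional K V] {W : Submodule K V}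
    (hdim : Module.finrank K V = Module.finrank K ↥W + 1)
    {v : V} (hv : v ∉ W) : W ⊔ Submodule.span K {v} = ⊤ := by
  have hv0 : v ≠ 0 := fun h => hv (h ▸ W.zero_mem)
  apply Submodule.eq_top_of_finrank_eq
  have h := Submodule.finrank_sup_add_finrank_inf_eq W (Submodule.span K {v})
  rw [aux_span_inf_bot hv le_rfl, finrank_bot, finrank_span_singleton hv0] at h
  omega

end Aux


/-- if `rN` is the trivial one-dimensional extension of `rM`
(i.e. `r_N(E_N) = r_M(E_M) + 1`), then the bases of `rM` are exactly the sets
`B ∩ W` for `B` a basis of `rN`. -/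
theorem stmt13 [Field K] [Fintype K] [AddCommGroup V] [Module K V] [FiniteDimensional K V]
    (W : Submodule K V) (hdim : Module.finrank K V = Module.finrank K ↥W + 1)
    (rM : Submodule K ↥W → ℕ) (hM : IsQMatroid rM)
    (rN : Submodule K V → ℕ) (hN : IsQMatroid rN)
    (hrest : ∀ X : Submodule K ↥W, rN (Submodule.map W.subtype X) = rM X)
    (htriv : rN ⊤ = rM ⊤ + 1) :
    Submodule.map W.subtype '' {B : Submodule K ↥W | IsBasisOf rM B} =
      (fun B : Submodule K V => B ⊓ W) '' {B : Submodule K V | IsBasisOf rN B} := by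
  classical
  obtain ⟨hN1, hN2, hN3⟩ := hN
  have hrW : rN W = rM ⊤ := by
    have := hrest ⊤
    rwa [Submodule.map_subtype_top] at this
  have h0 : rN (⊥ : Submodule K V) = 0 := Nat.le_zero.mp (by simpa using hN1 ⊥)
  ext S
  simp only [Set.mem_image, Set.mem_setOf_eq]
  constructor
  · rintro ⟨B', ⟨hB'1, hB'2⟩, rfl⟩
    have hWne : W ≠ ⊤ := by
      intro h
      rw [h, finrank_top] at hdim
      omega
    obtain ⟨v, hv⟩ : ∃ v, v ∉ W := by
      by_contra h
      push_neg at h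
      exact hWne (Submodule.eq_top_iff'.mpr h)
    have hv0 : v ≠ 0 := fun h => hv (h ▸ W.zero_mem)
    set X := Submodule.map W.subtype B' with hX
    set e := Submodule.span K {v} with he
    have hXW : X ≤ W := Submodule.map_subtype_le W B'
    have hXe : X ⊓ e = ⊥ := aux_span_inf_bot hv hXW
    have hfe : Module.finrank K ↥e = 1 := finrank_span_singleton hv0
    have hfX : Module.finrank K ↥X = rM ⊤ := by
      rw [hX, Submodule.finrank_map_subtype_eq, hB'2]
    have hfB : Module.finrank K ↥(X ⊔ e) = rM ⊤ + 1 := by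
      have h := Submodule.finrank_sup_add_finrank_inf_eq X e
      rw [hXe, finrank_bot] at h
      omega
    have hsupW : (X ⊔ e) ⊔ W = ⊤ := by
      rw [sup_right_comm, sup_eq_right.mpr hXW, aux_sup_span_top hdim hv]
    have hinfW : (X ⊔ e) ⊓ W = X := by
      have hle : X ≤ (X ⊔ e) ⊓ W := le_inf le_sup_left hXW
      have h := Submodule.finrank_sup_add_finrank_inf_eq (X ⊔ e) W
      rw [hsupW, finrank_top] at h
      exact (Submodule.eq_of_le_of_finrank_le hle (by omega)).symm
    have hrX : rN X = rM ⊤ := by rw [hX, hrest, hB'1, hB'2]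
    have hrB : rN (X ⊔ e) = rM ⊤ + 1 := by
      have hub : rN (X ⊔ e) ≤ rM ⊤ + 1 := hfB ▸ hN1 (X ⊔ e)
      have hlb := hN3 (X ⊔ e) W
      rw [hsupW, hinfW, htriv, hrX, hrW] at hlb
      omega
    exact ⟨X ⊔ e, ⟨by rw [hrB, hfB], by rw [hfB, htriv]⟩, hinfW⟩
  · rintro ⟨B, ⟨hB1, hB2⟩, rfl⟩
    rw [htriv] at hB2
    have hBW : ¬ B ≤ W := by
      intro hle
      have hmap : Submodule.map W.subtype (Submodule.comap W.subtype B) = B := by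
        rw [Submodule.map_comap_subtype, inf_eq_right.mpr hle]
      have h1 := hrest (Submodule.comap W.subtype B)
      rw [hmap] at h1
      have h2 : rM (Submodule.comap W.subtype B) ≤ rM ⊤ := hM.2.1 _ ⊤ le_top
      omega
    obtain ⟨v, hvB, hv⟩ := SetLike.not_le_iff_exists.mp hBW
    have hv0 : v ≠ 0 := fun h => hv (h ▸ W.zero_mem)
    set e := Submodule.span K {v} with he
    have heB : e ≤ B := Submodule.span_le.mpr (by simpa using hvB)
    have hsupW : B ⊔ W = ⊤ := by
      rw [eq_top_iff, ← aux_sup_span_top hdim hv]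
      exact sup_le le_sup_right (heB.trans le_sup_left)
    have hfinf : Module.finrank K ↥(B ⊓ W) = rM ⊤ := by
      have h := Submodule.finrank_sup_add_finrank_inf_eq B W
      rw [hsupW, finrank_top] at h
      omega
    have hinfe : (B ⊓ W) ⊓ e = ⊥ := aux_span_inf_bot hv inf_le_right
    have hdecomp : (B ⊓ W) ⊔ e = B := by
      have hle : (B ⊓ W) ⊔ e ≤ B := sup_le inf_le_left heB
      have h := Submodule.finrank_sup_add_finrank_inf_eq (B ⊓ W) e
      rw [hinfe, finrank_bot, finrank_span_singleton hv0] at h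
      exact Submodule.eq_of_le_of_finrank_le hle (by omega)
    have hlb : rM ⊤ ≤ rN (B ⊓ W) := by
      have h := hN3 (B ⊓ W) e
      have hre : rN e ≤ 1 := (hN1 e).trans (by rw [finrank_span_singleton hv0])
      rw [hdecomp, hinfe, h0, hB1, hB2] at h
      omega
    have hub : rN (B ⊓ W) ≤ rM ⊤ := by
      have h := hN3 B W
      rw [hsupW, htriv, hrW] at h
      omega
    have hmap : Submodule.map W.subtype (Submodule.comap W.subtype (B ⊓ W)) = B ⊓ W := by
      rw [Submodule.map_comap_subtype, inf_eq_right.mpr inf_le_right]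
    have hfc : Module.finrank K ↥(Submodule.comap W.subtype (B ⊓ W)) = rM ⊤ := by
      rw [← Submodule.finrank_map_subtype_eq, hmap, hfinf]
    have hrc : rM (Submodule.comap W.subtype (B ⊓ W)) = rM ⊤ := by
      rw [← hrest, hmap]; omega
    exact ⟨_, ⟨by rw [hrc, hfc], by rw [hfc]⟩, hmap⟩
end

section
/- Let M1 and M2 be q-matroids on E_1 = F_q^{n_1} and E_2 = F_q^{n_2}, each equipped with the standard bilinear form. Then M1 is isomorphic to M2 if and only if the dual M1* is isomorphic to the dual M2*. -/
open Module Submodule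

variable {K V V₁ V₂ : Type*}

/-- The orthogonal complement of a subspace of `Fin n → K` with respect to the
standard (dot product) bilinear form. -/
def stdPerp {K : Type*} [Field K] {n : ℕ} (X : Submodule K (Fin n → K)) :
    Submodule K (Fin n → K) where
  carrier := {v | ∀ w ∈ X, ∑ i, v i * w i = 0}
  add_mem' := by
    intro a b ha hb w hw
    simp only [Set.mem_setOf_eq] at ha hb ⊢
    simp [Pi.add_apply, add_mul, Finset.sum_add_distrib, ha w hw, hb w hw]
  zero_mem' := by
    intro w hw
    simp
  smul_mem' := by
    intro c v hv w hw
    simp only [Set.mem_setOf_eq] at hv ⊢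
    simp [Pi.smul_apply, smul_eq_mul, mul_assoc, ← Finset.mul_sum, hv w hw]

/-- The rank function of the dual q-matroid:
`r*(X) = dim X − r(E) + r(X^⊥)`. -/
noncomputable def qdualRank {K : Type*} [Field K] {n : ℕ} (r : Submodule K (Fin n → K) → ℕ)
    (X : Submodule K (Fin n → K)) : ℕ :=
  Module.finrank K X + r (stdPerp X) - r ⊤


section AuxProof

variable {K : Type*} [Field K]

open Module Submodule

lemma mem_stdPerp' {n : ℕ} {X : Submodule K (Fin n → K)} {v : Fin n → K} :
    v ∈ stdPerp X ↔ ∀ w ∈ X, ∑ i, v i * w i = 0 := Iff.rfl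

/-- The standard pairing as a linear equivalence to the dual space. -/
noncomputable def stdDual (K : Type*) [Field K] (n : ℕ) :
    (Fin n → K) ≃ₗ[K] Module.Dual K (Fin n → K) :=
  (Pi.basisFun K (Fin n)).toDualEquiv

lemma stdDual_apply {n : ℕ} (v w : Fin n → K) :
    stdDual K n v w = ∑ i, v i * w i := by
  have hw : w = ∑ i, w i • (Pi.basisFun K (Fin n)) i := by
    ext j
    rw [Finset.sum_apply]
    simp [Pi.basisFun_apply, Pi.single_apply]
  conv_lhs => rw [hw]
  rw [show (stdDual K n v : Module.Dual K (Fin n → K)) = (Pi.basisFun K (Fin n)).toDual v from rfl]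
  rw [map_sum]
  simp only [map_smul, smul_eq_mul, Basis.toDual_apply_left, Pi.basisFun_repr]
  exact Finset.sum_congr rfl fun i _ => mul_comm _ _

lemma stdPerp_eq_comap {n : ℕ} (X : Submodule K (Fin n → K)) :
    stdPerp X = X.dualAnnihilator.comap (stdDual K n).toLinearMap := by
  ext v
  simp [mem_stdPerp', Submodule.mem_dualAnnihilator, stdDual_apply]

lemma finrank_stdPerp {n : ℕ} (X : Submodule K (Fin n → K)) :
    Module.finrank K (stdPerp X) + Module.finrank K X = n := by
  rw [stdPerp_eq_comap]
  rw [show X.dualAnnihilator.comap (stdDual K n).toLinearMap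
      = X.dualAnnihilator.map (stdDual K n).symm.toLinearMap from
    (Submodule.comap_equiv_eq_map_symm _ _)]
  rw [LinearEquiv.finrank_map_eq]
  rw [← (Subspace.quotEquivAnnihilator X).finrank_eq]
  rw [Submodule.finrank_quotient_add_finrank]
  exact Module.finrank_fin_fun K

lemma le_stdPerp_stdPerp {n : ℕ} (X : Submodule K (Fin n → K)) :
    X ≤ stdPerp (stdPerp X) := by
  intro w hw v hv
  have := hv w hw
  simpa [mul_comm] using this

lemma stdPerp_stdPerp {n : ℕ} (X : Submodule K (Fin n → K)) :
    stdPerp (stdPerp X) = X := by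
  have h1 := finrank_stdPerp X
  have h2 := finrank_stdPerp (stdPerp X)
  exact (Submodule.eq_of_le_of_finrank_le (le_stdPerp_stdPerp X) (by omega)).symm

lemma exists_perp_map {n₁ n₂ : ℕ} (g : (Fin n₁ → K) ≃ₗ[K] (Fin n₂ → K)) :
    ∃ h : (Fin n₁ → K) ≃ₗ[K] (Fin n₂ → K),
      ∀ X : Submodule K (Fin n₁ → K),
        stdPerp (X.map h.toLinearMap) = (stdPerp X).map g.toLinearMap := by
  refine ⟨(stdDual K n₁).trans (g.symm.dualMap.trans (stdDual K n₂).symm), fun X => ?_⟩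
  set h : (Fin n₁ → K) ≃ₗ[K] (Fin n₂ → K) :=
    (stdDual K n₁).trans (g.symm.dualMap.trans (stdDual K n₂).symm) with hh
  have key : ∀ (x : Fin n₁ → K) (v : Fin n₂ → K),
      ∑ i, (h x) i * v i = ∑ i, x i * (g.symm v) i := by
    intro x v
    have h1 : (∑ i, (h x) i * v i) = stdDual K n₂ (h x) v := (stdDual_apply _ _).symm
    have h2 : stdDual K n₂ (h x) = g.symm.dualMap (stdDual K n₁ x) := by
      simp [hh]
    rw [h1, h2]
    have h3 : g.symm.dualMap (stdDual K n₁ x) v = stdDual K n₁ x (g.symm v) := rfl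
    rw [h3, stdDual_apply]
  ext v
  constructor
  · intro hv
    rw [Submodule.mem_map_equiv]
    intro x hx
    have := hv (h x) (Submodule.mem_map_of_mem hx)
    have hsymm : ∑ i, v i * (h x) i = ∑ i, (g.symm v) i * x i := by
      calc ∑ i, v i * (h x) i = ∑ i, (h x) i * v i := by simp [mul_comm]
        _ = ∑ i, x i * (g.symm v) i := key x v
        _ = ∑ i, (g.symm v) i * x i := by simp [mul_comm]
    rw [hsymm] at this
    exact this
  · intro hv
    rw [Submodule.mem_map_equiv] at hv
    rintro y hy
    rw [Submodule.mem_map] at hy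
    obtain ⟨x, hx, rfl⟩ := hy
    have := hv x hx
    calc ∑ i, v i * (h.toLinearMap x) i = ∑ i, (h x) i * v i := by simp [mul_comm]
      _ = ∑ i, x i * (g.symm v) i := key x v
      _ = ∑ i, (g.symm v) i * x i := by simp [mul_comm]
      _ = 0 := this

lemma dual_iso {n₁ n₂ : ℕ} (s₁ : Submodule K (Fin n₁ → K) → ℕ)
    (s₂ : Submodule K (Fin n₂ → K) → ℕ) (g : (Fin n₁ → K) ≃ₗ[K] (Fin n₂ → K))
    (hg : ∀ X : Submodule K (Fin n₁ → K), s₁ X = s₂ (X.map g.toLinearMap)) :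
    ∃ h : (Fin n₁ → K) ≃ₗ[K] (Fin n₂ → K),
      ∀ X : Submodule K (Fin n₁ → K),
        qdualRank s₁ X = qdualRank s₂ (X.map h.toLinearMap) := by
  obtain ⟨h, hperp⟩ := exists_perp_map g
  refine ⟨h, fun X => ?_⟩
  have htop : s₁ ⊤ = s₂ ⊤ := by
    have := hg ⊤
    rwa [Submodule.map_top, LinearEquiv.range] at this
  unfold qdualRank
  rw [hperp X, ← hg, LinearEquiv.finrank_map_eq, ← htop]

lemma rank_diff {n : ℕ} {r : Submodule K (Fin n → K) → ℕ} (hr : IsQMatroid r) :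
    ∀ (d : ℕ) (X Y : Submodule K (Fin n → K)), X ≤ Y →
      Module.finrank K Y ≤ Module.finrank K X + d →
      r Y + Module.finrank K X ≤ r X + Module.finrank K Y := by
  intro d
  induction d with
  | zero =>
    intro X Y hle hd
    have : X = Y := Submodule.eq_of_le_of_finrank_le hle (by omega)
    subst this
    omega
  | succ d ih =>
    intro X Y hle hd
    by_cases hXY : X = Y
    · subst hXY; omega
    · obtain ⟨z, hzY, hzX⟩ := SetLike.exists_of_lt (lt_of_le_of_ne hle hXY)
      set X' := X ⊔ (K ∙ z) with hX'
      have hz0 : z ≠ 0 := fun h => hzX (h ▸ X.zero_mem)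
      have hsz : Module.finrank K (K ∙ z) = 1 := finrank_span_singleton hz0
      have hzX' : z ∈ X' := Submodule.mem_sup_right (Submodule.mem_span_singleton_self z)
      have hX'Y : X' ≤ Y := sup_le hle ((Submodule.span_singleton_le_iff_mem z Y).2 hzY)
      have hfub : Module.finrank K X' ≤ Module.finrank K X + 1 := by
        have := Submodule.finrank_sup_add_finrank_inf_eq X (K ∙ z)
        rw [← hX'] at this
        omega
      have hflb : Module.finrank K X < Module.finrank K X' :=
        Submodule.finrank_lt_finrank_of_lt
          (lt_of_le_of_ne le_sup_left (fun h => hzX (by rw [h]; exact hzX')))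
      have hrX' : r X' ≤ r X + 1 := by
        have hsub := hr.2.2 X (K ∙ z)
        rw [← hX'] at hsub
        have hrz : r (K ∙ z) ≤ 1 := le_trans (hr.1 (K ∙ z)) (le_of_eq hsz)
        omega
      have := ih X' Y hX'Y (by omega)
      omega

lemma qdual_qdual {n : ℕ} {r : Submodule K (Fin n → K) → ℕ} (hr : IsQMatroid r)
    (X : Submodule K (Fin n → K)) : qdualRank (qdualRank r) X = r X := by
  have hfintop : Module.finrank K (⊤ : Submodule K (Fin n → K)) = n := by
    rw [finrank_top]; exact Module.finrank_fin_fun K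
  have hbot : r ⊥ = 0 := by
    have := hr.1 (⊥ : Submodule K (Fin n → K))
    simpa using this
  have htopperp : stdPerp (⊤ : Submodule K (Fin n → K)) = ⊥ := by
    have h := finrank_stdPerp (⊤ : Submodule K (Fin n → K))
    rw [hfintop] at h
    exact Submodule.finrank_eq_zero.mp (by omega)
  have hperpX := finrank_stdPerp X
  have hdd := stdPerp_stdPerp X
  have htopn : r ⊤ ≤ n := le_trans (hr.1 ⊤) (le_of_eq hfintop)
  have h1 : r ⊤ + Module.finrank K X ≤ r X + n := by
    have := rank_diff hr n X ⊤ le_top (by omega)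
    omega
  unfold qdualRank
  rw [hdd, htopperp, hbot, hfintop]
  omega

end AuxProof

/-- two q-matroids on `F_q^{n₁}` and `F_q^{n₂}` are isomorphic
iff their duals are isomorphic. -/
theorem stmt19 {K : Type*} [Field K] [Fintype K] {n₁ n₂ : ℕ}
    (r₁ : Submodule K (Fin n₁ → K) → ℕ) (h₁ : IsQMatroid r₁)
    (r₂ : Submodule K (Fin n₂ → K) → ℕ) (h₂ : IsQMatroid r₂) :
    (∃ g : (Fin n₁ → K) ≃ₗ[K] (Fin n₂ → K),
      ∀ X : Submodule K (Fin n₁ → K), r₁ X = r₂ (Submodule.map g.toLinearMap X)) ↔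
    (∃ g : (Fin n₁ → K) ≃ₗ[K] (Fin n₂ → K),
      ∀ X : Submodule K (Fin n₁ → K),
        qdualRank r₁ X = qdualRank r₂ (Submodule.map g.toLinearMap X)) := by
  constructor
  · rintro ⟨g, hg⟩
    exact dual_iso r₁ r₂ g hg
  · rintro ⟨h, hh⟩
    obtain ⟨g, hgd⟩ := dual_iso (qdualRank r₁) (qdualRank r₂) h hh
    refine ⟨g, fun X => ?_⟩
    have := hgd X
    rwa [qdual_qdual h₁, qdual_qdual h₂] at this
end
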